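/- arXiv:2511.15508 — 7 statements merged into one kernel-verified Lean document; each statement's English description precedes it below -/
import Mathlib

section
/- Let k ≥ 3 and n > 2k be integers and let F ⊆ \binom{[n]}{k} be an intersecting family. Then the second largest degree satisfies d_2(F) ≤ \binom{n-2}{k-2} + \binom{n-3}{k-2}. -/
/-!
Take `x ≠ y` whose degrees are both at least `d₂(F)`, and suppose the degree of `x` exceeds
`C(n-2, k-2) + C(n-3, k-2)`. At most `C(n-2, k-2)` members of `F` contain both `x` and `y`, so the
link `F(x ȳ)` has more than `C(n-3, k-2)` members. The links `F(x ȳ)` and `F(y x̄)` are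
cross-intersecting `(k-1)`-uniform families on the `n - 2` points other than `x, y`, so by
Kruskal–Katona `F(y x̄)` has at most `C(n-3, k-2)` members, and the degree of `y` is at most
`C(n-2, k-2) + C(n-3, k-2)`.
-/

open Finset

/-- The degree of `x` in the family `F`: the number of members of `F` containing `x`. -/
def degree (F : Finset (Finset ℕ)) (x : ℕ) : ℕ :=
  (F.filter fun A => x ∈ A).card

/-- The `i`-th largest degree (1-indexed) of the family `F` on ground set `[n] = {1, …, n}`:
the `i`-th entry of the list of degrees of all `n` elements arranged in nonincreasing order. -/
def nthDegree (n : ℕ) (F : Finset (Finset ℕ)) (i : ℕ) : ℕ :=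
  (((Finset.Icc 1 n).val.map (degree F)).sort (· ≥ ·)).getD (i - 1) 0

open FinsetFamily

namespace Finset

/- Daykin's proof of Erdős–Ko–Rado: the `(m - 2ℓ)`-fold shadow of the complements of `𝒜` is
disjoint from `ℬ`, and by Kruskal–Katona it has at least `C(m-1, ℓ)` members. -/
lemma card_le_choose_of_forall_not_disjoint_fin {m ℓ : ℕ} (hℓ : 1 ≤ ℓ) (hm : 2 * ℓ ≤ m)
    {𝒜 ℬ : Finset (Finset (Fin m))} (h𝒜 : (𝒜 : Set (Finset (Fin m))).Sized ℓ)
    (hℬ : (ℬ : Set (Finset (Fin m))).Sized ℓ) (hcross : ∀ A ∈ 𝒜, ∀ B ∈ ℬ, ¬Disjoint A B)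
    (h𝒜card : (m - 1).choose (ℓ - 1) ≤ #𝒜) :
    #ℬ ≤ (m - 1).choose (ℓ - 1) := by
  have hcompls : (𝒜ᶜˢ : Set (Finset (Fin m))).Sized (m - ℓ) := by simpa using h𝒜.compls
  have hdisj : Disjoint ℬ (∂^[m - 2 * ℓ] 𝒜ᶜˢ) := disjoint_right.2 fun B hB hBℬ => by
    simp only [mem_shadow_iterate_iff_exists_sdiff, mem_compls] at hB
    obtain ⟨C, hC, hBC, -⟩ := hB
    exact hcross _ hC _ hBℬ (disjoint_of_subset_right hBC disjoint_compl_left)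
  have hshadow : (m - 1).choose ℓ ≤ #(∂^[m - 2 * ℓ] 𝒜ᶜˢ) := by
    have := kruskal_katona_lovasz_form (i := m - 2 * ℓ) (k := m - 1) (by omega) (by omega)
      (by omega) hcompls
      (by rwa [card_compls, ← Nat.choose_symm_of_eq_add (show m - 1 = ℓ - 1 + (m - ℓ) by omega)])
    rwa [show m - ℓ - (m - 2 * ℓ) = ℓ by omega] at this
  have hsized : ((ℬ ∪ ∂^[m - 2 * ℓ] 𝒜ᶜˢ : Finset _) : Set (Finset (Fin m))).Sized ℓ := by
    rw [coe_union, Set.sized_union]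
    exact ⟨hℬ, by convert hcompls.shadow_iterate using 1; omega⟩
  have := hsized.card_le
  rw [card_union_of_disjoint hdisj, Fintype.card_fin,
    Nat.choose_eq_choose_pred_add (by omega) (by omega)] at this
  omega

lemma card_le_choose_of_forall_not_disjoint {α : Type*} {G : Finset α} {ℓ : ℕ} (hℓ : 1 ≤ ℓ)
    (hG : 2 * ℓ ≤ #G) {𝒜 ℬ : Finset (Finset α)} (h𝒜 : 𝒜 ⊆ powersetCard ℓ G)
    (hℬ : ℬ ⊆ powersetCard ℓ G) (hcross : ∀ A ∈ 𝒜, ∀ B ∈ ℬ, ¬Disjoint A B)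
    (h𝒜card : (#G - 1).choose (ℓ - 1) ≤ #𝒜) :
    #ℬ ≤ (#G - 1).choose (ℓ - 1) := by
  let f : Fin #G ↪ α := G.equivFin.symm.toEmbedding.trans (.subtype (· ∈ G))
  have hpow : powersetCard ℓ G = (powersetCard ℓ univ).map (mapEmbedding f).toEmbedding := by
    rw [← powersetCard_map]
    congr
    ext a
    simpa [f] using
      ⟨fun ha => ⟨G.equivFin ⟨a, ha⟩, by simp⟩, by rintro ⟨i, rfl⟩; exact Subtype.prop _⟩
  rw [hpow, subset_map_iff] at h𝒜 hℬ
  obtain ⟨𝒜, h𝒜, rfl⟩ := h𝒜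
  obtain ⟨ℬ, hℬ, rfl⟩ := hℬ
  simp only [card_map] at h𝒜card ⊢
  refine card_le_choose_of_forall_not_disjoint_fin hℓ hG
    (subset_powersetCard_univ_iff.1 h𝒜) (subset_powersetCard_univ_iff.1 hℬ) ?_ h𝒜card
  intro A hA B hB
  simpa using hcross _ (mem_map_of_mem _ hA) _ (mem_map_of_mem _ hB)

variable {α : Type*} [DecidableEq α] {F : Finset (Finset α)} {X : Finset α} {k : ℕ} {x y : α}

/-- The link `F(x ȳ)`. -/
def link (F : Finset (Finset α)) (x y : α) : Finset (Finset α) :=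
  {A ∈ F | x ∈ A ∧ y ∉ A}.image (·.erase x)

lemma card_link (F : Finset (Finset α)) (x y : α) : #(link F x y) = #{A ∈ F | x ∈ A ∧ y ∉ A} :=
  card_image_of_injOn <| (erase_injOn' x).mono fun _ hA => (mem_filter.1 hA).2.1

lemma card_filter_mem_eq_add_card_link (F : Finset (Finset α)) (x y : α) :
    #{A ∈ F | x ∈ A} = #{A ∈ F | x ∈ A ∧ y ∈ A} + #(link F x y) := by
  rw [card_link, ← filter_filter, ← filter_filter]
  exact (card_filter_add_card_filter_not _).symm

lemma link_subset_powersetCard (hF : F ⊆ powersetCard k X) :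
    link F x y ⊆ powersetCard (k - 1) ((X.erase x).erase y) := by
  simp only [subset_iff, link, mem_image, mem_filter]
  rintro _ ⟨A, ⟨hAF, hxA, hyA⟩, rfl⟩
  obtain ⟨hAX, hAk⟩ := mem_powersetCard.1 (hF hAF)
  rw [mem_powersetCard, card_erase_of_mem hxA, hAk]
  refine ⟨fun z hz => ?_, rfl⟩
  rw [mem_erase] at hz
  exact mem_erase.2 ⟨ne_of_mem_of_not_mem hz.2 hyA, mem_erase.2 ⟨hz.1, hAX hz.2⟩⟩

lemma card_filter_mem_mem_le (hF : F ⊆ powersetCard k X) (hk : 2 ≤ k) (hx : x ∈ X) (hy : y ∈ X)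
    (hxy : x ≠ y) : #{A ∈ F | x ∈ A ∧ y ∈ A} ≤ (#X - 2).choose (k - 2) := by
  have hpair : #({x, y} : Finset α) = 2 := card_pair hxy
  calc #{A ∈ F | x ∈ A ∧ y ∈ A} ≤ #{A ∈ powersetCard k X | {x, y} ⊆ A} := by
        gcongr
        simpa only [insert_subset_iff, singleton_subset_iff] using filter_subset_filter _ hF
    _ = (#X - 2).choose (k - 2) := by
        rw [card_filter_powersetCard_subset _ _ _ (by simp [insert_subset_iff, hx, hy])
          (hpair ▸ hk), hpair]

lemma _root_.Set.Intersecting.not_disjoint_link (hF : (F : Set (Finset α)).Intersecting)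
    {A B : Finset α} (hA : A ∈ link F x y) (hB : B ∈ link F y x) : ¬Disjoint A B := by
  rw [link, mem_image] at hA hB
  simp only [mem_filter] at hA hB
  obtain ⟨A, ⟨hAF, hxA, hyA⟩, rfl⟩ := hA
  obtain ⟨B, ⟨hBF, hyB, hxB⟩, rfl⟩ := hB
  obtain ⟨z, hzA, hzB⟩ := not_disjoint_iff.1 (hF hAF hBF)
  exact not_disjoint_iff.2 ⟨z, mem_erase.2 ⟨ne_of_mem_of_not_mem hzB hxB, hzA⟩,
    mem_erase.2 ⟨ne_of_mem_of_not_mem hzA hyA, hzB⟩⟩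

theorem _root_.Set.Intersecting.card_filter_mem_le_of_lt (hF : (F : Set (Finset α)).Intersecting)
    (hFX : F ⊆ powersetCard k X) (hk : 2 ≤ k) (hX : 2 * k ≤ #X) (hx : x ∈ X) (hy : y ∈ X)
    (hxy : x ≠ y)
    (hdeg : (#X - 2).choose (k - 2) + (#X - 3).choose (k - 2) < #{A ∈ F | x ∈ A}) :
    #{A ∈ F | y ∈ A} ≤ (#X - 2).choose (k - 2) + (#X - 3).choose (k - 2) := by
  have hG : #((X.erase x).erase y) = #X - 2 := by
    rw [card_erase_of_mem (mem_erase.2 ⟨hxy.symm, hy⟩), card_erase_of_mem hx]; rfl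
  have hchoose : (#((X.erase x).erase y) - 1).choose (k - 1 - 1) = (#X - 3).choose (k - 2) := by
    rw [hG, Nat.sub_sub, Nat.sub_sub]
  have hxy_card := card_filter_mem_mem_le hFX hk hx hy hxy
  have hyx_card := card_filter_mem_mem_le hFX hk hy hx hxy.symm
  have hx_split := card_filter_mem_eq_add_card_link F x y
  have hy_split := card_filter_mem_eq_add_card_link F y x
  have hlink := card_le_choose_of_forall_not_disjoint (by omega) (by omega)
    (link_subset_powersetCard hFX) (erase_right_comm (s := X) ▸ link_subset_powersetCard hFX)
    (fun A hA B hB => hF.not_disjoint_link hA hB) (by omega : _ ≤ #(link F x y))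
  omega

end Finset

lemma two_le_card_filter_nthDegree_two_le (F : Finset (Finset ℕ)) {n : ℕ} (hn : 2 ≤ n) :
    2 ≤ #{x ∈ Icc 1 n | nthDegree n F 2 ≤ degree F x} := by
  have hlen : (((Icc 1 n).val.map (degree F)).sort (· ≥ ·)).length = n := by simp
  have hcount : #{x ∈ Icc 1 n | nthDegree n F 2 ≤ degree F x} =
      (((Icc 1 n).val.map (degree F)).sort (· ≥ ·)).countP (nthDegree n F 2 ≤ ·) := by
    rw [card_def, filter_val, ← Multiset.countP_map,
      ← Multiset.coe_countP, Multiset.sort_eq]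
  have hsorted := Multiset.pairwise_sort ((Icc 1 n).val.map (degree F)) (· ≥ ·)
  rw [hcount, nthDegree]
  rcases hl : ((Icc 1 n).val.map (degree F)).sort (· ≥ ·) with _ | ⟨a, _ | ⟨b, t⟩⟩
  · simp [hl] at hlen; omega
  · simp [hl] at hlen; omega
  rw [hl] at hsorted
  have hba : b ≤ a := (List.pairwise_cons.1 hsorted).1 b (by simp)
  simp [hba]

theorem stmt_0 (n k : ℕ) (hk : 3 ≤ k) (hn : 2 * k < n)
    (F : Finset (Finset ℕ)) (hF : F ⊆ Finset.powersetCard k (Finset.Icc 1 n))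
    (hint : ∀ A ∈ F, ∀ B ∈ F, (A ∩ B).Nonempty) :
    nthDegree n F 2 ≤ (n - 2).choose (k - 2) + (n - 3).choose (k - 2) := by
  obtain ⟨x, hx, y, hy, hxy⟩ :=
    one_lt_card.1 (two_le_card_filter_nthDegree_two_le F (n := n) (by omega))
  rw [mem_filter] at hx hy
  have hintersecting : (F : Set (Finset ℕ)).Intersecting := fun A hA B hB =>
    not_disjoint_iff_nonempty_inter.2 (hint A hA B hB)
  have hcard : #(Icc 1 n) = n := by simp
  by_contra! hlt
  have hy_le := hintersecting.card_filter_mem_le_of_lt hF (by omega) (by rw [hcard]; omega)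
    hx.1 hy.1 hxy (by rw [hcard]; exact hlt.trans_le hx.2)
  rw [hcard] at hy_le
  exact (hy.2.trans hy_le).not_gt hlt
end

section
/- Let n > 2k ≥ 2 be integers and let F ⊆ \binom{[n]}{k} be an intersecting family with d_1(F) < |F| (i.e., the maximum degree is strictly less than the number of members, equivalently F has no common element). Then d_1(F) ≤ \binom{n-1}{k-1} − \binom{n-k-1}{k-1}. -/
open Finset

/-!
Since `F` has no common element, every `x` misses some `B ∈ F`. Removing `x` from the members
containing it is injective and lands in the `(k-1)`-subsets of `[n] \ {x}` that meet `B`;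
there are `C(n-1, k-1) - C(n-k-1, k-1)` of these.
-/

theorem Multiset.getD_zero_sort_ge_eq_sup (m : Multiset ℕ) :
    (m.sort (· ≥ ·)).getD 0 0 = m.sup := by
  have hm : ↑(m.sort (· ≥ ·)) = m := m.sort_eq _
  have hsorted := m.pairwise_sort (· ≥ ·)
  rcases hl : m.sort (· ≥ ·) with _ | ⟨a, t⟩
  · rw [hl] at hm
    simp [← hm]
  · rw [hl, List.pairwise_cons] at hsorted
    rw [hl] at hm
    refine le_antisymm (Multiset.le_sup (by simp [← hm])) (Multiset.sup_le.mpr fun b hb => ?_)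
    rw [← hm, Multiset.mem_coe, List.mem_cons] at hb
    rcases hb with rfl | hb
    · exact le_rfl
    · exact hsorted.1 b hb

theorem nthDegree_one_eq_sup (n : ℕ) (F : Finset (Finset ℕ)) :
    nthDegree n F 1 = (Icc 1 n).sup (degree F) :=
  Multiset.getD_zero_sort_ge_eq_sup _

theorem exists_notMem_of_degree_lt_card {F : Finset (Finset ℕ)} {x : ℕ} (h : degree F x < #F) :
    ∃ B ∈ F, x ∉ B := by
  by_contra! hall
  exact h.ne (congrArg card (filter_true_of_mem hall))

theorem card_filter_not_disjoint_powersetCard {α : Type*} [DecidableEq α] {T B : Finset α}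
    (hBT : B ⊆ T) (r : ℕ) :
    #((powersetCard r T).filter fun C => ¬Disjoint C B) = (#T).choose r - (#T - #B).choose r := by
  have hdisj : (powersetCard r T).filter (fun C => Disjoint C B) = powersetCard r (T \ B) := by
    ext C
    simp only [mem_filter, mem_powersetCard, subset_sdiff]
    tauto
  rw [filter_not, card_sdiff_of_subset (filter_subset _ _), hdisj, card_powersetCard,
    card_powersetCard, card_sdiff_of_subset hBT]

theorem degree_le_card_filter_not_disjoint {k : ℕ} {s B : Finset ℕ} {F : Finset (Finset ℕ)}
    {x : ℕ} (hF : F ⊆ powersetCard k s) (hint : ∀ A ∈ F, ∀ B ∈ F, (A ∩ B).Nonempty)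
    (hB : B ∈ F) (hxB : x ∉ B) :
    degree F x ≤ #((powersetCard (k - 1) (s.erase x)).filter fun C => ¬Disjoint C B) := by
  refine card_le_card_of_injOn (fun A => A.erase x) (fun A hA => ?_) ?_
  · obtain ⟨hAF, hxA⟩ := mem_filter.mp hA
    obtain ⟨hAs, hAcard⟩ := mem_powersetCard.mp (hF hAF)
    obtain ⟨y, hy⟩ := hint A hAF B hB
    obtain ⟨hyA, hyB⟩ := mem_inter.mp hy
    simp only [coe_filter, mem_powersetCard, Set.mem_ofPred_eq]
    refine ⟨⟨erase_subset_erase x hAs, by rw [card_erase_of_mem hxA, hAcard]⟩, ?_⟩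
    exact not_disjoint_iff.mpr ⟨y, mem_erase.mpr ⟨ne_of_mem_of_not_mem hyB hxB, hyA⟩, hyB⟩
  · intro A hA A' hA' h
    simp only [coe_filter, Set.mem_ofPred_eq] at hA hA'
    rw [← insert_erase hA.2, ← insert_erase hA'.2]
    exact congrArg (insert x) h

theorem degree_le_choose_sub_choose {k : ℕ} {s B : Finset ℕ} {F : Finset (Finset ℕ)}
    {x : ℕ} (hF : F ⊆ powersetCard k s) (hint : ∀ A ∈ F, ∀ B ∈ F, (A ∩ B).Nonempty)
    (hx : x ∈ s) (hB : B ∈ F) (hxB : x ∉ B) :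
    degree F x ≤ (#s - 1).choose (k - 1) - (#s - 1 - k).choose (k - 1) := by
  obtain ⟨hBs, hBcard⟩ := mem_powersetCard.mp (hF hB)
  have hBs' : B ⊆ s.erase x := fun y hy => mem_erase.mpr ⟨ne_of_mem_of_not_mem hy hxB, hBs hy⟩
  refine (degree_le_card_filter_not_disjoint hF hint hB hxB).trans_eq ?_
  rw [card_filter_not_disjoint_powersetCard hBs', card_erase_of_mem hx, hBcard]

theorem stmt_7_general (n k : ℕ)
    (F : Finset (Finset ℕ)) (hF : F ⊆ Finset.powersetCard k (Finset.Icc 1 n))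
    (hint : ∀ A ∈ F, ∀ B ∈ F, (A ∩ B).Nonempty)
    (hd : nthDegree n F 1 < F.card) :
    nthDegree n F 1 ≤ (n - 1).choose (k - 1) - (n - k - 1).choose (k - 1) := by
  rw [nthDegree_one_eq_sup] at hd ⊢
  refine Finset.sup_le fun x hx => ?_
  obtain ⟨B, hB, hxB⟩ := exists_notMem_of_degree_lt_card ((le_sup hx).trans_lt hd)
  have := degree_le_choose_sub_choose hF hint hx hB hxB
  rwa [Nat.card_Icc, Nat.add_sub_cancel, Nat.sub_right_comm] at this

theorem stmt_7 (n k : ℕ) (hk : 1 ≤ k) (hn : 2 * k < n)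
    (F : Finset (Finset ℕ)) (hF : F ⊆ Finset.powersetCard k (Finset.Icc 1 n))
    (hint : ∀ A ∈ F, ∀ B ∈ F, (A ∩ B).Nonempty)
    (hd : nthDegree n F 1 < F.card) :
    nthDegree n F 1 ≤ (n - 1).choose (k - 1) - (n - k - 1).choose (k - 1) :=
  stmt_7_general n k F hF hint hd
end

section
/- Let a, b, n be positive integers with n ≥ a + b, and let A ⊆ \binom{[n]}{a} and B ⊆ \binom{[n]}{b} be cross-intersecting families. If |A| ≥ \binom{n-2}{a-2} + \binom{n-3}{a-2} + … + \binom{n-d}{a-2} for some integer d with 2 ≤ d ≤ b + 1, then |B| ≤ \binom{n-1}{b-1} + \binom{n-d}{b-d+1}. -/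
/-!
Relabel `[n]` as `Fin n`. If `a ≤ 1`, the family `A` is nonempty (`a - 2` truncates to `0`), so
it contains a set with at most one element, and every member of `B` passes through that point.

For `a ≥ 2`, suppose `|B|` exceeds the bound and put `m = n - b`. The complements of the members
of `B` are `m`-sets containing no member of `A`, so their `(m - a)`-th shadow is disjoint from
`A`. In colex order on `{0, …, n-1}`, the initial segment of `m`-sets ending at
`E = {n-1, n-d} ∪ {0, …, m-3}` consists of the `m`-subsets of `{0, …, n-2}`, the sets
`{n-1} ∪ S` with `S` an `(m-1)`-subset of `{0, …, n-d-1}`, and `E` itself; so it has at most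
`|B|` members, and its `(m - a)`-th shadow contains the `a`-subsets of `{0, …, n-2}`, the sets
`{n-1} ∪ S` with `S` an `(a-1)`-subset of `{0, …, n-d-1}`, and one `a`-subset of `E` containing
`n-1` and `n-d`. By Kruskal–Katona the shadow of the complements is at least as large, whence
`|A| ≤ C(n-1, a-1) - C(n-d, a-1) - 1`, which is one less than the hockey-stick sum
`∑_{j=2}^{d} C(n-j, a-2)`.
-/

open Finset Finset.Colex
open scoped FinsetFamily

lemma sum_Icc_choose_add_choose (N c : ℕ) {d : ℕ} (hd : 1 ≤ d) (hdN : d ≤ N) :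
    ∑ j ∈ Icc 2 d, (N - j).choose c + (N - d).choose (c + 1) = (N - 1).choose (c + 1) := by
  induction d, hd using Nat.le_induction with
  | base => simp
  | succ d hd ih =>
    rw [sum_Icc_succ_top (by omega), ← ih (by omega), show N - d = N - (d + 1) + 1 by omega,
      Nat.choose_succ_succ']
    ring

section CrossIntersecting

variable {α : Type*} [Fintype α] [DecidableEq α] {𝒜 ℬ : Finset (Finset α)} {s : Finset α}
  {a b : ℕ}

lemma card_le_choose_of_forall_mem (hℬ : (ℬ : Set (Finset α)).Sized b) {x : α}
    (hx : ∀ t ∈ ℬ, x ∈ t) : #ℬ ≤ (Fintype.card α - 1).choose (b - 1) := by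
  calc #ℬ ≤ #((powersetCard (b - 1) (univ.erase x)).image (insert x)) := by
        refine card_le_card fun t ht ↦ mem_image.2 ⟨t.erase x, ?_, insert_erase (hx t ht)⟩
        rw [mem_powersetCard, card_erase_of_mem (hx t ht), hℬ ht]
        exact ⟨erase_subset_erase _ (subset_univ _), rfl⟩
    _ ≤ (Fintype.card α - 1).choose (b - 1) := by
        rw [← card_univ, ← card_erase_of_mem (mem_univ x), ← card_powersetCard]
        exact card_image_le

lemma card_le_choose_of_forall_inter_nonempty (hs : #s ≤ 1) (hℬ : (ℬ : Set (Finset α)).Sized b)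
    (hcross : ∀ t ∈ ℬ, (s ∩ t).Nonempty) : #ℬ ≤ (Fintype.card α - 1).choose (b - 1) := by
  obtain rfl | ⟨t₀, ht₀⟩ := ℬ.eq_empty_or_nonempty
  · simp
  obtain ⟨x, hx⟩ := hcross t₀ ht₀
  refine card_le_choose_of_forall_mem hℬ (x := x) fun t ht ↦ ?_
  obtain ⟨z, hz⟩ := hcross t ht
  rw [mem_inter] at hx hz
  exact card_le_one.1 hs z hz.1 x hx.1 ▸ hz.2

lemma disjoint_shadow_iterate_compls (hcross : ∀ s ∈ 𝒜, ∀ t ∈ ℬ, (s ∩ t).Nonempty) (k : ℕ) :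
    Disjoint 𝒜 (∂^[k] ℬᶜˢ) := by
  refine disjoint_left.2 fun s hs hsℬ ↦ ?_
  obtain ⟨u, hu, hsu, -⟩ := mem_shadow_iterate_iff_exists_sdiff.1 hsℬ
  exact (hcross s hs _ (mem_compls.1 hu)).ne_empty
    (disjoint_iff_inter_eq_empty.1 (disjoint_of_subset_left hsu disjoint_compl_right))

lemma card_add_card_shadow_iterate_compls_le (h𝒜 : (𝒜 : Set (Finset α)).Sized a)
    (hℬ : (ℬ : Set (Finset α)).Sized b) (hab : a + b ≤ Fintype.card α)
    (hcross : ∀ s ∈ 𝒜, ∀ t ∈ ℬ, (s ∩ t).Nonempty) :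
    #𝒜 + #(∂^[Fintype.card α - b - a] ℬᶜˢ) ≤ (Fintype.card α).choose a := by
  have hshadow := hℬ.compls.shadow_iterate (k := Fintype.card α - b - a)
  rw [show Fintype.card α - b - (Fintype.card α - b - a) = a by omega] at hshadow
  have hunion : ((𝒜 ∪ ∂^[Fintype.card α - b - a] ℬᶜˢ : Finset _) : Set (Finset α)).Sized a := by
    rw [coe_union, Set.sized_union]
    exact ⟨h𝒜, hshadow⟩
  rw [← card_union_of_disjoint (disjoint_shadow_iterate_compls hcross _)]
  exact hunion.card_le

end CrossIntersecting

section Colex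

variable {α : Type*} [LinearOrder α] {s t : Finset α} {x : α}

lemma toColex_le_of_forall_lt_of_mem (hs : ∀ z ∈ s, z < x) (hx : x ∈ t) :
    toColex s ≤ toColex t :=
  (toColex_lt_singleton.2 hs).le.trans (singleton_le_toColex.2 ⟨x, hx, le_rfl⟩)

lemma toColex_erase_le_toColex_erase (hs : x ∈ s) (ht : x ∈ t) :
    toColex (s.erase x) ≤ toColex (t.erase x) ↔ toColex s ≤ toColex t := by
  simpa only [sdiff_singleton_eq_erase] using
    toColex_sdiff_le_toColex_sdiff (singleton_subset_iff.2 hs) (singleton_subset_iff.2 ht)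

lemma forall_lt_of_toColex_le (hst : toColex s ≤ toColex t) (ht : ∀ z ∈ t, z ≤ x) (hx : x ∉ s) :
    ∀ z ∈ s, z < x :=
  fun z hz ↦ (forall_le_mono hst ht z hz).lt_of_ne (by rintro rfl; exact hx hz)

end Colex

section InitSeg

variable {α : Type*} [LinearOrder α] [LocallyFiniteOrderBot α] {x y c : α}

lemma notMem_insert_Iio_of_lt (hyx : y < x) (hcy : c < y) : x ∉ insert y (Iio c) := by
  simp only [mem_insert, mem_Iio, not_or]
  exact ⟨hyx.ne', (hcy.trans hyx).not_gt⟩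

lemma card_insert_insert_Iio (hyx : y < x) (hcy : c < y) :
    #(insert x (insert y (Iio c))) = #(Iio c) + 2 := by
  rw [card_insert_of_notMem (notMem_insert_Iio_of_lt hyx hcy),
    card_insert_of_notMem (by simpa using hcy.le)]

lemma card_Iio_add_two_le (hyx : y < x) (hcy : c < y) : #(Iio c) + 2 ≤ #(Iio x) := by
  have := card_lt_card (Iio_ssubset_Iio hcy)
  have := card_lt_card (Iio_ssubset_Iio hyx)
  omega

variable [Fintype α]

lemma powersetCard_Iio_subset_initSeg (hyx : y < x) (hcy : c < y) :
    powersetCard (#(Iio c) + 2) (Iio x) ⊆ initSeg (insert x (insert y (Iio c))) := by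
  intro t ht
  rw [mem_powersetCard] at ht
  rw [mem_initSeg, card_insert_insert_Iio hyx hcy, ht.2]
  exact ⟨rfl, toColex_le_of_forall_lt_of_mem (fun z hz ↦ mem_Iio.1 (ht.1 hz))
    (mem_insert_self _ _)⟩

lemma image_insert_powersetCard_Iio_subset_initSeg (hyx : y < x) (hcy : c < y) :
    (powersetCard (#(Iio c) + 1) (Iio y)).image (insert x) ⊆
      initSeg (insert x (insert y (Iio c))) := by
  intro t ht
  obtain ⟨s, hs, rfl⟩ := mem_image.1 ht
  rw [mem_powersetCard] at hs
  have hxs : x ∉ s := fun h ↦ (mem_Iio.1 (hs.1 h)).not_gt hyx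
  rw [mem_initSeg, card_insert_insert_Iio hyx hcy, card_insert_of_notMem hxs, hs.2,
    ← toColex_erase_le_toColex_erase (mem_insert_self _ _) (mem_insert_self _ _),
    erase_insert hxs, erase_insert (notMem_insert_Iio_of_lt hyx hcy)]
  exact ⟨rfl, toColex_le_of_forall_lt_of_mem (fun z hz ↦ mem_Iio.1 (hs.1 hz))
    (mem_insert_self _ _)⟩

lemma initSeg_subset_union (hyx : y < x) (hcy : c < y) :
    initSeg (insert x (insert y (Iio c))) ⊆ powersetCard (#(Iio c) + 2) (Iio x) ∪
      (powersetCard (#(Iio c) + 1) (Iio y)).image (insert x) ∪ {insert x (insert y (Iio c))} := by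
  intro t ht
  rw [mem_initSeg, card_insert_insert_Iio hyx hcy] at ht
  obtain ⟨hcard, hle⟩ := ht
  have hE : ∀ z ∈ insert y (Iio c), z ≤ y := by
    simpa using fun z hz ↦ (hz.trans hcy).le
  obtain hxt | hxt := em' (x ∈ t)
  · refine mem_union_left _ (mem_union_left _ (mem_powersetCard.2 ⟨fun z hz ↦ ?_, hcard.symm⟩))
    refine mem_Iio.2 (forall_lt_of_toColex_le hle ?_ hxt z hz)
    simpa using ⟨hyx.le, fun z hz ↦ (hz.trans (hcy.trans hyx)).le⟩
  rw [← toColex_erase_le_toColex_erase hxt (mem_insert_self _ _),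
    erase_insert (notMem_insert_Iio_of_lt hyx hcy)] at hle
  have hcard' : #(t.erase x) = #(Iio c) + 1 := by rw [card_erase_of_mem hxt]; omega
  obtain hyt | hyt := em' (y ∈ t.erase x)
  · refine mem_union_left _ (mem_union_right _ (mem_image.2 ⟨t.erase x, ?_, insert_erase hxt⟩))
    exact mem_powersetCard.2
      ⟨fun z hz ↦ mem_Iio.2 (forall_lt_of_toColex_le hle hE hyt z hz), hcard'⟩
  rw [← toColex_erase_le_toColex_erase hyt (mem_insert_self _ _),
    erase_insert (by simpa using hcy.le)] at hle
  have hsub : (t.erase x).erase y ⊆ Iio c := fun z hz ↦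
    mem_Iio.2 (forall_lt_mono hle (fun _ ↦ mem_Iio.1) z hz)
  have heq := eq_of_subset_of_card_le hsub (by rw [card_erase_of_mem hyt]; omega)
  exact mem_union_right _ (mem_singleton.2 (by rw [← insert_erase hxt, ← insert_erase hyt, heq]))

lemma card_initSeg_le (hyx : y < x) (hcy : c < y) :
    #(initSeg (insert x (insert y (Iio c)))) ≤
      (#(Iio x)).choose (#(Iio c) + 2) + (#(Iio y)).choose (#(Iio c) + 1) + 1 := by
  calc _ ≤ #(powersetCard (#(Iio c) + 2) (Iio x) ∪
          (powersetCard (#(Iio c) + 1) (Iio y)).image (insert x) ∪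
          {insert x (insert y (Iio c))}) := card_le_card (initSeg_subset_union hyx hcy)
    _ ≤ #(powersetCard (#(Iio c) + 2) (Iio x)) +
          #((powersetCard (#(Iio c) + 1) (Iio y)).image (insert x)) + 1 :=
        (card_union_le _ _).trans (add_le_add (card_union_le _ _) (card_singleton _).le)
    _ ≤ _ := by
        rw [card_powersetCard]
        gcongr
        exact card_image_le.trans (card_powersetCard _ _).le

lemma powersetCard_Iio_subset_shadow_iterate_initSeg (hyx : y < x) (hcy : c < y) {r : ℕ}
    (hr : r ≤ #(Iio c) + 2) :
    powersetCard r (Iio x) ⊆ ∂^[#(Iio c) + 2 - r] (initSeg (insert x (insert y (Iio c)))) := by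
  intro s hs
  rw [mem_powersetCard] at hs
  obtain ⟨u, hsu, hux, hu⟩ :=
    exists_subsuperset_card_eq hs.1 (hs.2 ▸ hr) (card_Iio_add_two_le hyx hcy)
  refine mem_shadow_iterate_iff_exists_mem_card_add.2 ⟨u, ?_, hsu, by omega⟩
  exact powersetCard_Iio_subset_initSeg hyx hcy (mem_powersetCard.2 ⟨hux, hu⟩)

lemma image_insert_powersetCard_Iio_subset_shadow_iterate_initSeg (hyx : y < x) (hcy : c < y)
    {r : ℕ} (hr : r ≤ #(Iio c) + 1) :
    (powersetCard r (Iio y)).image (insert x) ⊆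
      ∂^[#(Iio c) + 1 - r] (initSeg (insert x (insert y (Iio c)))) := by
  intro t ht
  obtain ⟨s, hs, rfl⟩ := mem_image.1 ht
  rw [mem_powersetCard] at hs
  obtain ⟨u, hsu, huy, hu⟩ :=
    exists_subsuperset_card_eq hs.1 (hs.2 ▸ hr) (card_lt_card (Iio_ssubset_Iio hcy))
  have hxu : x ∉ u := fun h ↦ (mem_Iio.1 (huy h)).not_gt hyx
  have hxs : x ∉ s := fun h ↦ hxu (hsu h)
  refine mem_shadow_iterate_iff_exists_mem_card_add.2
    ⟨insert x u, ?_, insert_subset_insert _ hsu, ?_⟩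
  · exact image_insert_powersetCard_Iio_subset_initSeg hyx hcy
      (mem_image_of_mem _ (mem_powersetCard.2 ⟨huy, hu⟩))
  · rw [card_insert_of_notMem hxu, card_insert_of_notMem hxs]
    omega

lemma choose_add_choose_lt_card_shadow_iterate_initSeg (hyx : y < x) (hcy : c < y) {r : ℕ}
    (hr₂ : 2 ≤ r) (hr : r ≤ #(Iio c) + 2) :
    (#(Iio x)).choose r + (#(Iio y)).choose (r - 1) <
      #(∂^[#(Iio c) + 2 - r] (initSeg (insert x (insert y (Iio c))))) := by
  set 𝒮 := powersetCard r (Iio x)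
  set 𝒯 := (powersetCard (r - 1) (Iio y)).image (insert x)
  obtain ⟨L, hLc, hL⟩ := exists_subset_card_eq (s := Iio c) (n := r - 2) (by omega)
  have hyL : y ∉ L := fun h ↦ (mem_Iio.1 (hLc h)).not_gt hcy
  have hxL : x ∉ insert y L := fun h ↦
    notMem_insert_Iio_of_lt hyx hcy (insert_subset_insert _ hLc h)
  have hS : insert x (insert y L) ∈
      ∂^[#(Iio c) + 2 - r] (initSeg (insert x (insert y (Iio c)))) := by
    refine mem_shadow_iterate_iff_exists_mem_card_add.2
      ⟨_, mem_initSeg_self, insert_subset_insert _ (insert_subset_insert _ hLc), ?_⟩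
    rw [card_insert_insert_Iio hyx hcy, card_insert_of_notMem hxL, card_insert_of_notMem hyL]
    omega
  have hx𝒯 : ∀ t ∈ 𝒯, x ∈ t := by
    intro t ht
    obtain ⟨s, -, rfl⟩ := mem_image.1 ht
    exact mem_insert_self _ _
  have hdisj : Disjoint 𝒮 𝒯 := disjoint_left.2 fun t h𝒮 h𝒯 ↦
    (mem_Iio.1 ((mem_powersetCard.1 h𝒮).1 (hx𝒯 t h𝒯))).false
  have hS𝒮𝒯 : insert x (insert y L) ∉ 𝒮 ∪ 𝒯 := by
    rw [mem_union, not_or]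
    refine ⟨fun h ↦ (mem_Iio.1 ((mem_powersetCard.1 h).1 (mem_insert_self _ _))).false,
      fun h ↦ ?_⟩
    obtain ⟨s, hs, hsS⟩ := mem_image.1 h
    have hy : y ∈ insert x s := hsS ▸ mem_insert_of_mem (mem_insert_self _ _)
    obtain hxy | hys := mem_insert.1 hy
    · exact hyx.ne hxy
    · exact (mem_Iio.1 ((mem_powersetCard.1 hs).1 hys)).false
  have hinj : Set.InjOn (insert x) (powersetCard (r - 1) (Iio y) : Set (Finset α)) := by
    intro s hs t ht hst
    have hxs : x ∉ s := fun h ↦ (mem_Iio.1 ((mem_powersetCard.1 hs).1 h)).not_gt hyx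
    have hxt : x ∉ t := fun h ↦ (mem_Iio.1 ((mem_powersetCard.1 ht).1 h)).not_gt hyx
    rw [← erase_insert hxs, hst, erase_insert hxt]
  calc _ = #(𝒮 ∪ 𝒯) := by
        rw [card_union_of_disjoint hdisj, card_image_of_injOn hinj, card_powersetCard,
          card_powersetCard]
    _ < #(insert (insert x (insert y L)) (𝒮 ∪ 𝒯)) := card_lt_card (ssubset_insert hS𝒮𝒯)
    _ ≤ _ := by
      refine card_le_card (insert_subset hS (union_subset ?_ ?_))
      · exact powersetCard_Iio_subset_shadow_iterate_initSeg hyx hcy hr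
      · convert image_insert_powersetCard_Iio_subset_shadow_iterate_initSeg hyx hcy
          (r := r - 1) (by omega) using 2
        omega

end InitSeg

theorem card_le_choose_add_choose_of_crossIntersecting {n a b d : ℕ} (ha : 2 ≤ a)
    (hn : a + b ≤ n) (hd2 : 2 ≤ d) (hdb : d ≤ b + 1) {𝒜 ℬ : Finset (Finset (Fin n))}
    (h𝒜 : (𝒜 : Set (Finset (Fin n))).Sized a) (hℬ : (ℬ : Set (Finset (Fin n))).Sized b)
    (hcross : ∀ s ∈ 𝒜, ∀ t ∈ ℬ, (s ∩ t).Nonempty)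
    (h𝒜card : ∑ j ∈ Icc 2 d, (n - j).choose (a - 2) ≤ #𝒜) :
    #ℬ ≤ (n - 1).choose (b - 1) + (n - d).choose (b + 1 - d) := by
  by_contra! hℬcard
  set x : Fin n := ⟨n - 1, by omega⟩
  set y : Fin n := ⟨n - d, by omega⟩
  set c : Fin n := ⟨n - b - 2, by omega⟩
  have hyx : y < x := Fin.mk_lt_mk.2 (by omega)
  have hcy : c < y := Fin.mk_lt_mk.2 (by omega)
  have hx : #(Iio x) = n - 1 := Fin.card_Iio x
  have hy : #(Iio y) = n - d := Fin.card_Iio y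
  have hc : #(Iio c) + 2 = n - b := by rw [Fin.card_Iio c]; simp only [c]; omega
  have hsized : (ℬᶜˢ : Set (Finset (Fin n))).Sized (n - b) := by simpa using hℬ.compls
  have hinit : IsInitSeg (initSeg (insert x (insert y (Iio c)))) (n - b) := by
    simpa only [card_insert_insert_Iio hyx hcy, hc] using
      isInitSeg_initSeg (s := insert x (insert y (Iio c)))
  have hseg : #(initSeg (insert x (insert y (Iio c)))) ≤ #ℬᶜˢ := by
    have h := card_initSeg_le hyx hcy
    rw [hx, hy, hc, show #(Iio c) + 1 = n - b - 1 by omega,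
      Nat.choose_symm_of_eq_add (show n - 1 = n - b + (b - 1) by omega),
      Nat.choose_symm_of_eq_add (show n - d = n - b - 1 + (b + 1 - d) by omega)] at h
    rw [card_compls]
    omega
  have hKK := iterated_kk (k := n - b - a) hsized hseg hinit
  have hshadow := choose_add_choose_lt_card_shadow_iterate_initSeg hyx hcy ha (by omega)
  rw [hc, hx, hy] at hshadow
  have hcount := card_add_card_shadow_iterate_compls_le h𝒜 hℬ (by simpa using hn) hcross
  rw [Fintype.card_fin] at hcount
  have hsum := sum_Icc_choose_add_choose n (a - 2) (by omega : 1 ≤ d) (by omega)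
  have hchoose := Nat.choose_succ_succ' (n - 1) (a - 1)
  rw [show a - 2 + 1 = a - 1 by omega] at hsum
  rw [show n - 1 + 1 = n by omega, show a - 1 + 1 = a by omega] at hchoose
  omega

lemma map_univ_eq_Icc (n : ℕ) :
    (univ : Finset (Fin n)).map ((Fin.succEmb n).trans Fin.valEmbedding) = Icc 1 n := by
  ext x
  simp only [mem_map, mem_univ, Function.Embedding.trans_apply, Fin.coe_succEmb,
    Fin.valEmbedding_apply, Fin.val_succ, true_and, mem_Icc]
  exact ⟨by rintro ⟨i, rfl⟩; omega, fun h ↦ ⟨⟨x - 1, by omega⟩, Nat.sub_add_cancel h.1⟩⟩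

theorem stmt_9_general (n a b d : ℕ) (hn : a + b ≤ n)
    (hd2 : 2 ≤ d) (hdb : d ≤ b + 1)
    (A B : Finset (Finset ℕ))
    (hA : A ⊆ Finset.powersetCard a (Finset.Icc 1 n))
    (hB : B ⊆ Finset.powersetCard b (Finset.Icc 1 n))
    (hcross : ∀ s ∈ A, ∀ t ∈ B, (s ∩ t).Nonempty)
    (hAcard : ∑ j ∈ Finset.Icc 2 d, (n - j).choose (a - 2) ≤ A.card) :
    B.card ≤ (n - 1).choose (b - 1) + (n - d).choose (b + 1 - d) := by
  rw [← map_univ_eq_Icc, powersetCard_map] at hA hB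
  obtain ⟨𝒜, h𝒜, rfl⟩ := subset_map_iff.1 hA
  obtain ⟨ℬ, hℬ, rfl⟩ := subset_map_iff.1 hB
  rw [subset_powersetCard_univ_iff] at h𝒜 hℬ
  rw [card_map] at hAcard ⊢
  have hcross' : ∀ s ∈ 𝒜, ∀ t ∈ ℬ, (s ∩ t).Nonempty := fun s hs t ht ↦ by
    simpa [← map_inter] using hcross _ (mem_map_of_mem _ hs) _ (mem_map_of_mem _ ht)
  obtain ha | ha := le_or_gt a 1
  · have h2 : (n - 2).choose (a - 2) ≤ ∑ j ∈ Icc 2 d, (n - j).choose (a - 2) :=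
      single_le_sum (f := fun j ↦ (n - j).choose (a - 2)) (fun _ _ ↦ Nat.zero_le _)
        (mem_Icc.2 ⟨le_rfl, hd2⟩)
    have h1 : (n - 2).choose (a - 2) = 1 := by
      rw [show a - 2 = 0 by omega, Nat.choose_zero_right]
    obtain ⟨s, hs⟩ := card_pos.1 (by omega : 0 < #𝒜)
    have hstar :=
      card_le_choose_of_forall_inter_nonempty ((h𝒜 hs).le.trans ha) hℬ (hcross' s hs)
    rw [Fintype.card_fin] at hstar
    omega
  · exact card_le_choose_add_choose_of_crossIntersecting ha hn hd2 hdb h𝒜 hℬ hcross' hAcard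

theorem stmt_9 (n a b d : ℕ) (ha : 1 ≤ a) (hb : 1 ≤ b) (hn : a + b ≤ n)
    (hd2 : 2 ≤ d) (hdb : d ≤ b + 1)
    (A B : Finset (Finset ℕ))
    (hA : A ⊆ Finset.powersetCard a (Finset.Icc 1 n))
    (hB : B ⊆ Finset.powersetCard b (Finset.Icc 1 n))
    (hcross : ∀ s ∈ A, ∀ t ∈ B, (s ∩ t).Nonempty)
    (hAcard : ∑ j ∈ Finset.Icc 2 d, (n - j).choose (a - 2) ≤ A.card) :
    B.card ≤ (n - 1).choose (b - 1) + (n - d).choose (b + 1 - d) :=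
  stmt_9_general n a b d hn hd2 hdb A B hA hB hcross hAcard
end

section
/- Let a, b, n be positive integers with n ≥ a + b, and let A ⊆ \binom{[n]}{a} and B ⊆ \binom{[n]}{b} be cross-intersecting families. If |A| ≥ \binom{n-ℓ}{a-ℓ} for some integer ℓ with 1 ≤ ℓ ≤ a, then |B| ≤ \binom{n}{b} − \binom{n-ℓ}{b}. -/
/-!
Pass to complements: `𝒜ᶜˢ` is a family of `(n - a)`-sets with at least `(n - l).choose (n - a)`
members, so by the Lovász form of Kruskal–Katona its `(n - a - b)`-th shadow has at least
`(n - l).choose b` members, all of size `b`. A `b`-set lying inside the complement of some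
`s ∈ 𝒜` misses `s`, so this shadow is disjoint from `ℬ`, and both live among the `n.choose b`
subsets of size `b`.
-/

open Finset

open scoped FinsetFamily

namespace Finset

lemma disjoint_shadow_iterate_compls {α : Type*} [Fintype α] [DecidableEq α]
    {𝒜 ℬ : Finset (Finset α)} (hcross : ∀ s ∈ 𝒜, ∀ t ∈ ℬ, ¬Disjoint s t) (k : ℕ) :
    Disjoint ℬ (∂^[k] 𝒜ᶜˢ) := by
  refine disjoint_right.2 fun t ht htℬ ↦ ?_
  obtain ⟨u, hu, htu, -⟩ := mem_shadow_iterate_iff_exists_sdiff.1 ht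
  exact hcross _ (mem_compls.1 hu) t htℬ (disjoint_compl_left.mono_right htu)

theorem card_le_choose_sub_choose_of_crossIntersecting {n a b l : ℕ}
    {𝒜 ℬ : Finset (Finset (Fin n))} (h𝒜 : (𝒜 : Set (Finset (Fin n))).Sized a)
    (hℬ : (ℬ : Set (Finset (Fin n))).Sized b)
    (hcross : ∀ s ∈ 𝒜, ∀ t ∈ ℬ, ¬Disjoint s t) (hn : a + b ≤ n) (hla : l ≤ a)
    (h𝒜card : (n - l).choose (a - l) ≤ #𝒜) :
    #ℬ ≤ n.choose b - (n - l).choose b := by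
  have hcompls : (𝒜ᶜˢ : Set (Finset (Fin n))).Sized (n - a) := by simpa using h𝒜.compls
  have hcompls_card : (n - l).choose (n - a) ≤ #𝒜ᶜˢ := by
    rwa [card_compls, ← Nat.choose_symm_of_eq_add (show n - l = a - l + (n - a) by omega)]
  have hshadow_card : (n - l).choose b ≤ #(∂^[n - a - b] 𝒜ᶜˢ) := by
    simpa [show n - a - (n - a - b) = b by omega] using
      kruskal_katona_lovasz_form (i := n - a - b) (k := n - l) (by omega) (by omega) tsub_le_self
        hcompls hcompls_card
  have hshadow : (∂^[n - a - b] 𝒜ᶜˢ : Set (Finset (Fin n))).Sized b := by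
    simpa [show n - a - (n - a - b) = b by omega] using hcompls.shadow_iterate (k := n - a - b)
  have hunion : #ℬ + #(∂^[n - a - b] 𝒜ᶜˢ) ≤ n.choose b := by
    rw [← card_union_of_disjoint (disjoint_shadow_iterate_compls hcross _)]
    simpa using Set.Sized.card_le (𝒜 := ℬ ∪ _) <| by
      rw [coe_union]; exact Set.sized_union.2 ⟨hℬ, hshadow⟩
  omega

lemma univ_map_equivFin_symm_subtype {α : Type*} (S : Finset α) :
    univ.map (S.equivFin.symm.toEmbedding.trans (Function.Embedding.subtype (· ∈ S))) = S := by
  rw [← map_map, univ_map_equiv_to_embedding, univ_eq_attach, attach_map_val]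

variable {α β : Type*} [Fintype β] [DecidableEq α] {ι : β ↪ α} {A : Finset (Finset α)}

lemma map_filter_map_mem (hA : ∀ s ∈ A, s ⊆ univ.map ι) :
    ({t | t.map ι ∈ A} : Finset (Finset β)).map (mapEmbedding ι).toEmbedding = A := by
  ext s
  simp only [mem_map, mem_filter, mem_univ, true_and, RelEmbedding.coe_toEmbedding,
    mapEmbedding_apply]
  refine ⟨fun ⟨_, ht, hts⟩ ↦ hts ▸ ht, fun hs ↦ ?_⟩
  obtain ⟨t, -, rfl⟩ := subset_map_iff.1 (hA s hs)
  exact ⟨t, hs, rfl⟩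

lemma sized_filter_map_mem {r : ℕ} (hA : (A : Set (Finset α)).Sized r) :
    (({t | t.map ι ∈ A} : Finset (Finset β)) : Set (Finset β)).Sized r :=
  fun _ ht ↦ card_map ι ▸ hA (mem_filter.1 (mem_coe.1 ht)).2

theorem card_le_choose_sub_choose_of_crossIntersecting_of_subset_powersetCard
    {S : Finset α} {n a b l : ℕ} (hS : #S = n) {B : Finset (Finset α)}
    (hA : A ⊆ powersetCard a S) (hB : B ⊆ powersetCard b S)
    (hcross : ∀ s ∈ A, ∀ t ∈ B, ¬Disjoint s t) (hn : a + b ≤ n) (hla : l ≤ a)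
    (hAcard : (n - l).choose (a - l) ≤ #A) :
    #B ≤ n.choose b - (n - l).choose b := by
  subst hS
  set ι := S.equivFin.symm.toEmbedding.trans (Function.Embedding.subtype (· ∈ S))
  have hι : univ.map ι = S := univ_map_equivFin_symm_subtype S
  have hA_map := map_filter_map_mem (ι := ι) fun s hs ↦ by
    rw [hι]; exact (mem_powersetCard.1 (hA hs)).1
  have hB_map := map_filter_map_mem (ι := ι) fun t ht ↦ by
    rw [hι]; exact (mem_powersetCard.1 (hB ht)).1
  rw [← hA_map, card_map] at hAcard
  rw [← hB_map, card_map]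
  refine card_le_choose_sub_choose_of_crossIntersecting
    (sized_filter_map_mem ((Set.sized_powersetCard S a).mono (coe_subset.2 hA)))
    (sized_filter_map_mem ((Set.sized_powersetCard S b).mono (coe_subset.2 hB)))
    (fun s hs t ht ↦ ?_) hn hla hAcard
  rw [← disjoint_map ι]
  exact hcross _ (mem_filter.1 hs).2 _ (mem_filter.1 ht).2

end Finset

theorem stmt_10_general (n a b l : ℕ) (hn : a + b ≤ n)
    (hla : l ≤ a)
    (A B : Finset (Finset ℕ))
    (hA : A ⊆ Finset.powersetCard a (Finset.Icc 1 n))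
    (hB : B ⊆ Finset.powersetCard b (Finset.Icc 1 n))
    (hcross : ∀ s ∈ A, ∀ t ∈ B, (s ∩ t).Nonempty)
    (hAcard : (n - l).choose (a - l) ≤ A.card) :
    B.card ≤ n.choose b - (n - l).choose b :=
  card_le_choose_sub_choose_of_crossIntersecting_of_subset_powersetCard (by simp) hA hB
    (fun s hs t ht ↦ not_disjoint_iff_nonempty_inter.2 (hcross s hs t ht)) hn hla hAcard

theorem stmt_10 (n a b l : ℕ) (ha : 1 ≤ a) (hb : 1 ≤ b) (hn : a + b ≤ n)
    (hl1 : 1 ≤ l) (hla : l ≤ a)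
    (A B : Finset (Finset ℕ))
    (hA : A ⊆ Finset.powersetCard a (Finset.Icc 1 n))
    (hB : B ⊆ Finset.powersetCard b (Finset.Icc 1 n))
    (hcross : ∀ s ∈ A, ∀ t ∈ B, (s ∩ t).Nonempty)
    (hAcard : (n - l).choose (a - l) ≤ A.card) :
    B.card ≤ n.choose b - (n - l).choose b :=
  stmt_10_general n a b l hn hla A B hA hB hcross hAcard
end

section
/- Let 1 ≤ t ≤ k and n > 2k − t, and let F ⊆ \binom{[n]}{k} be a shifted, saturated, t-intersecting family. If B ⊆ [n] with |B| ≤ k is a t-transversal of F that is minimal under containment (no proper subset of B is a t-transversal of F), then B ⊆ [2k − t] = {1, 2, …, 2k − t}. -/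
open Finset

/-- The shifting partial order: for sets `A = {a₁ < … < a_k}` and `B = {b₁ < … < b_k}`
of the same size, `A ≺ B` iff `aᵢ ≤ bᵢ` for all `i`. -/
def shiftPrec (A B : Finset ℕ) : Prop :=
  A.card = B.card ∧
  ∀ i : ℕ, (A.sort (· ≤ ·)).getD i 0 ≤ (B.sort (· ≤ ·)).getD i 0

/-!
Suppose `c ∈ B` with `c > 2k - t`. Minimality of `B` yields `A ∈ F` containing `c` with
`|B ∩ A| = t`. If some `x < c` lay outside `A ∪ B`, the shift `A - c + x` would be in `F`
and meet `B` in only `t - 1` elements. Hence `[c] ⊆ A ∪ B`, so `c ≤ |A ∪ B| ≤ 2k - t`.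
-/

theorem List.getD_le_iff_lt_countP {l : List ℕ} (hl : l.Pairwise (· ≤ ·)) {i : ℕ}
    (hi : i < l.length) (m : ℕ) : l.getD i 0 ≤ m ↔ i < l.countP (· ≤ m) := by
  rw [List.getD_eq_getElem l 0 hi]
  have mono : ∀ {p q} (hq : q < l.length) (hpq : p ≤ q), l[p] ≤ l[q] := fun hq hpq =>
    hpq.eq_or_lt.elim (fun h => by subst h; rfl)
      (List.pairwise_iff_getElem.mp hl _ _ _ hq)
  constructor
  · intro h
    have hprefix : (l.take (i + 1)).countP (· ≤ m) = i + 1 := by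
      rw [List.countP_eq_length.mpr, List.length_take_of_le hi]
      intro a ha
      obtain ⟨j, hj, rfl⟩ := List.mem_iff_getElem.mp ha
      rw [List.length_take_of_le hi] at hj
      simpa [List.getElem_take] using (mono hi (Nat.le_of_lt_succ hj)).trans h
    have := (List.take_sublist (i + 1) l).countP_le (p := (· ≤ m))
    omega
  · intro h
    by_contra! hm
    have hsuffix : (l.drop i).countP (· ≤ m) = 0 := by
      refine List.countP_eq_zero.mpr fun a ha => ?_
      obtain ⟨j, hj, rfl⟩ := List.mem_iff_getElem.mp ha
      rw [List.length_drop] at hj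
      simpa [List.getElem_drop] using hm.trans_le (mono (by omega) (Nat.le_add_right i j))
    have hprefix := (l.take i).countP_le_length (p := (· ≤ m))
    rw [← List.take_append_drop i l, List.countP_append, hsuffix] at h
    rw [List.length_take] at hprefix
    omega

theorem Finset.countP_sort_eq_card_filter (S : Finset ℕ) (m : ℕ) :
    (S.sort (· ≤ ·)).countP (· ≤ m) = #{a ∈ S | a ≤ m} := by
  rw [(S.sort_perm_toList (· ≤ ·)).countP_eq, ← Multiset.coe_countP, coe_toList,
    Multiset.countP_eq_card_filter]
  rfl

theorem shiftPrec_of_card_filter_le {A B : Finset ℕ} (hcard : #A = #B)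
    (h : ∀ m, #{b ∈ B | b ≤ m} ≤ #{a ∈ A | a ≤ m}) : shiftPrec A B := by
  refine ⟨hcard, fun i => ?_⟩
  by_cases hi : i < #B
  · have hiB : i < (B.sort (· ≤ ·)).length := by rwa [length_sort]
    have hiA : i < (A.sort (· ≤ ·)).length := by rwa [length_sort, hcard]
    set m := (B.sort (· ≤ ·)).getD i 0
    have hB := (List.getD_le_iff_lt_countP (pairwise_sort _ _) hiB m).mp le_rfl
    rw [countP_sort_eq_card_filter] at hB
    rw [List.getD_le_iff_lt_countP (pairwise_sort _ _) hiA, countP_sort_eq_card_filter]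
    exact hB.trans_le (h m)
  · rw [List.getD_eq_default _ _ (by rw [length_sort]; omega)]
    exact Nat.zero_le _

theorem shiftPrec_insert_erase {A : Finset ℕ} {x c : ℕ} (hxc : x < c) (hcA : c ∈ A)
    (hxA : x ∉ A) : shiftPrec (insert x (A.erase c)) A := by
  refine shiftPrec_of_card_filter_le ?_ fun m => ?_
  · rw [card_insert_of_notMem (fun h => hxA (mem_of_mem_erase h)), card_erase_add_one hcA]
  · refine card_le_card_of_injOn (fun y => if y = c then x else y) ?_ ?_
    · intro y hy
      simp only [coe_filter, Set.mem_ofPred_eq] at hy ⊢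
      split_ifs with hyc
      · exact ⟨mem_insert_self _ _, by omega⟩
      · exact ⟨mem_insert_of_mem (mem_erase.mpr ⟨hyc, hy.1⟩), hy.2⟩
    · intro y hy z hz hyz
      simp only [coe_filter, Set.mem_ofPred_eq] at hy hz hyz
      grind

theorem exists_card_inter_eq_of_not_transversal_erase {α : Type*} [DecidableEq α]
    {F : Finset (Finset α)} {B : Finset α} {t : ℕ} {c : α} (hBt : ∀ A ∈ F, t ≤ #(B ∩ A))
    (hc : ¬ ∀ A ∈ F, t ≤ #(B.erase c ∩ A)) : ∃ A ∈ F, c ∈ A ∧ #(B ∩ A) = t := by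
  push Not at hc
  obtain ⟨A, hA, hlt⟩ := hc
  rw [erase_inter] at hlt
  have hle := hBt A hA
  by_cases hcA : c ∈ A
  · refine ⟨A, hA, hcA, ?_⟩
    have := pred_card_le_card_erase (s := B ∩ A) (a := c)
    omega
  · rw [erase_eq_of_notMem (fun h => hcA (mem_inter.mp h).2)] at hlt
    omega

theorem Icc_subset_union_of_card_inter_eq {n t : ℕ} {F : Finset (Finset ℕ)}
    (hF : ∀ A ∈ F, A ⊆ Icc 1 n)
    (hshift : ∀ C ∈ F, ∀ A : Finset ℕ, A ⊆ Icc 1 n → shiftPrec A C → A ∈ F)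
    {B : Finset ℕ} (hBt : ∀ A ∈ F, t ≤ #(B ∩ A)) {A : Finset ℕ} (hA : A ∈ F) {c : ℕ}
    (hcB : c ∈ B) (hcA : c ∈ A) (htight : #(B ∩ A) = t) : Icc 1 c ⊆ A ∪ B := by
  intro x hx
  rw [mem_Icc] at hx
  by_contra hxAB
  rw [mem_union, not_or] at hxAB
  obtain ⟨hxA, hxB⟩ := hxAB
  have hxc : x < c := lt_of_le_of_ne hx.2 (by rintro rfl; exact hxA hcA)
  have hcn := mem_Icc.mp (hF A hA hcA)
  have hshifted : insert x (A.erase c) ∈ F := by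
    refine hshift A hA _ (insert_subset (mem_Icc.mpr ⟨hx.1, by omega⟩) ?_)
      (shiftPrec_insert_erase hxc hcA hxA)
    exact (erase_subset c A).trans (hF A hA)
  have hdrop := hBt _ hshifted
  rw [inter_insert_of_notMem hxB, inter_erase,
    card_erase_of_mem (mem_inter.mpr ⟨hcB, hcA⟩), htight] at hdrop
  have : 0 < t := htight ▸ card_pos.mpr ⟨c, mem_inter.mpr ⟨hcB, hcA⟩⟩
  omega

theorem stmt_12_general (n k t : ℕ)
    (F : Finset (Finset ℕ)) (hF : F ⊆ Finset.powersetCard k (Finset.Icc 1 n))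
    (hshift : ∀ C ∈ F, ∀ A : Finset ℕ, A ⊆ Finset.Icc 1 n → shiftPrec A C → A ∈ F)
    (B : Finset ℕ) (hBn : B ⊆ Finset.Icc 1 n) (hBk : B.card ≤ k)
    (hBt : ∀ A ∈ F, t ≤ (B ∩ A).card)
    (hmin : ∀ B' ⊂ B, ¬ (∀ A ∈ F, t ≤ (B' ∩ A).card)) :
    B ⊆ Finset.Icc 1 (2 * k - t) := by
  intro c hcB
  have hc1 := (mem_Icc.mp (hBn hcB)).1
  obtain ⟨A, hA, hcA, htight⟩ :=
    exists_card_inter_eq_of_not_transversal_erase hBt (hmin _ (erase_ssubset hcB))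
  obtain ⟨-, hAk⟩ := mem_powersetCard.mp (hF hA)
  have hcover := card_le_card <| Icc_subset_union_of_card_inter_eq
    (fun A hA => (mem_powersetCard.mp (hF hA)).1) hshift hBt hA hcB hcA htight
  have hunion := card_union_add_card_inter A B
  rw [Nat.card_Icc] at hcover
  rw [inter_comm, htight] at hunion
  rw [mem_Icc]
  omega

theorem stmt_12 (n k t : ℕ) (ht : 1 ≤ t) (htk : t ≤ k) (hn : 2 * k - t < n)
    (F : Finset (Finset ℕ)) (hF : F ⊆ Finset.powersetCard k (Finset.Icc 1 n))
    (hint : ∀ A ∈ F, ∀ C ∈ F, t ≤ (A ∩ C).card)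
    (hshift : ∀ C ∈ F, ∀ A : Finset ℕ, A ⊆ Finset.Icc 1 n → shiftPrec A C → A ∈ F)
    (hsat : ∀ G ∈ Finset.powersetCard k (Finset.Icc 1 n), G ∉ F →
      ¬ (∀ A ∈ insert G F, ∀ C ∈ insert G F, t ≤ (A ∩ C).card))
    (B : Finset ℕ) (hBn : B ⊆ Finset.Icc 1 n) (hBk : B.card ≤ k)
    (hBt : ∀ A ∈ F, t ≤ (B ∩ A).card)
    (hmin : ∀ B' ⊂ B, ¬ (∀ A ∈ F, t ≤ (B' ∩ A).card)) :
    B ⊆ Finset.Icc 1 (2 * k - t) :=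
  stmt_12_general n k t F hF hshift B hBn hBk hBt hmin
end

section
/- Let k ≥ 3 and n ≥ 2k, let F ⊆ \binom{[n]}{k} be an intersecting family, and let u ∈ [n] satisfy |F(u)| = d_1(F). If there exists v ∈ [n] \ {u} with |F(v)| > \binom{n-2}{k-2} and |F(ū, v)| ≤ \binom{n-4}{k-2}, then |F(ū, v)| > (1/2)·|F(ū)|. -/
/-!
Write `E = F(ū, v)`, `D = F(ū, v̄)` and `X = [n] \ {u, v}`. The traces `B \ {u, v}` of the members
of `F` through both `u` and `v` are `(k - 2)`-subsets of `X` that meet every member of `D`, so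
together with the family `W` of `(k - 2)`-subsets of `X` missing some member of `D` they number at
most `C(n - 2, k - 2) < d(v) = |F(u, v)| + |E|`; hence `|W| < |E|`.
On the other hand `W` is the `(n - 2k)`-fold shadow of the complements in `X` of the members of `D`,
and Kruskal–Katona gives `|W| ≥ min(|D|, C(n - 4, k - 2))`: either `D` is large and Lovász's form
applies, or the initial colex segment of size `|D|` lives on `n - 4` points, where the local LYM
inequality and `C(n - 4, n - 2 - k) = C(n - 4, k - 2)` apply. As `|E| ≤ C(n - 4, k - 2)`, this yields
`|D| ≤ |W| < |E|`, that is `|F(ū)| = |E| + |D| < 2|E|`.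
-/

open Finset

open scoped FinsetFamily

namespace Finset

variable {α β : Type*}

section Shadow
variable [DecidableEq α] [DecidableEq β] {f : α → β}

lemma shadow_image_image (hf : Function.Injective f) (𝒜 : Finset (Finset α)) :
    ∂ (𝒜.image (image f)) = (∂ 𝒜).image (image f) := by
  ext S
  constructor
  · intro hS
    obtain ⟨_, hT, a, ha, rfl⟩ := mem_shadow_iff.1 hS
    obtain ⟨A, hA, rfl⟩ := mem_image.1 hT
    obtain ⟨x, hx, rfl⟩ := mem_image.1 ha
    exact mem_image.2 ⟨A.erase x, erase_mem_shadow hA hx, image_erase hf A x⟩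
  · intro hS
    obtain ⟨_, hT, rfl⟩ := mem_image.1 hS
    obtain ⟨A, hA, x, hx, rfl⟩ := mem_shadow_iff.1 hT
    rw [image_erase hf]
    exact erase_mem_shadow (mem_image_of_mem _ hA) (mem_image_of_mem f hx)

lemma card_shadow_iterate_image_image (hf : Function.Injective f) (i : ℕ)
    (𝒜 : Finset (Finset α)) : #(∂^[i] (𝒜.image (image f))) = #(∂^[i] 𝒜) := by
  suffices ∂^[i] (𝒜.image (image f)) = (∂^[i] 𝒜).image (image f) by
    rw [this, card_image_of_injective _ (image_injective hf)]
  induction i generalizing 𝒜 with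
  | zero => rfl
  | succ i ih =>
    rw [Function.iterate_succ_apply, Function.iterate_succ_apply, shadow_image_image hf, ih]

end Shadow

theorem card_div_choose_le_card_shadow_iterate_div_choose {𝕜 : Type*} [Semifield 𝕜]
    [LinearOrder 𝕜] [IsStrictOrderedRing 𝕜] [DecidableEq α] [Fintype α]
    {𝒜 : Finset (Finset α)} {r i : ℕ} (h𝒜 : (𝒜 : Set (Finset α)).Sized r) (hi : i ≤ r) :
    (#𝒜 : 𝕜) / (Fintype.card α).choose r ≤ #(∂^[i] 𝒜) / (Fintype.card α).choose (r - i) := by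
  induction i with
  | zero => simp
  | succ i ih =>
    calc _ ≤ (#(∂^[i] 𝒜) : 𝕜) / (Fintype.card α).choose (r - i) := ih (by omega)
      _ ≤ #(∂ (∂^[i] 𝒜)) / (Fintype.card α).choose (r - i - 1) :=
        card_div_choose_le_card_shadow_div_choose (by omega) h𝒜.shadow_iterate
      _ = _ := by rw [Function.iterate_succ_apply', Nat.sub_sub]

lemma exists_subset_card_eq_forall_le_mem [LinearOrder α] {s : Finset α} {m : ℕ}
    (hm : m ≤ #s) : ∃ t ⊆ s, #t = m ∧ ∀ a ∈ t, ∀ b ∈ s, b ≤ a → b ∈ t := by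
  induction s using Finset.induction_on_max generalizing m with
  | empty => exact ⟨∅, subset_rfl, by simp [Nat.le_zero.1 hm], by simp⟩
  | insert a s has ih =>
    have ha : a ∉ s := fun h => lt_irrefl a (has a h)
    rw [card_insert_of_notMem ha] at hm
    obtain hm | rfl := hm.lt_or_eq
    · obtain ⟨t, hts, rfl, ht⟩ := ih (Nat.le_of_lt_succ hm)
      refine ⟨t, hts.trans (subset_insert _ _), rfl, fun x hx y hy hyx => ?_⟩
      obtain rfl | hy := mem_insert.1 hy
      · exact absurd (has x (hts hx)) hyx.not_gt
      · exact ht x hx y hy hyx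
    · exact ⟨insert a s, subset_rfl, card_insert_of_notMem ha, fun _ _ _ hb _ => hb⟩

namespace Colex

lemma exists_isInitSeg_card_eq [LinearOrder α] [Fintype α] {r m : ℕ}
    (hm : m ≤ (Fintype.card α).choose r) : ∃ 𝒞 : Finset (Finset α), IsInitSeg 𝒞 r ∧ #𝒞 = m := by
  obtain ⟨C, hCL, rfl, hC⟩ := exists_subset_card_eq_forall_le_mem (m := m)
    (s := (powersetCard r (univ : Finset α)).map toColex.toEmbedding)
    (by rwa [card_map, card_powersetCard, card_univ])
  have hsized : ∀ A, toColex A ∈ C → #A = r := fun A hA => by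
    simpa using hCL hA
  refine ⟨C.map ofColex.toEmbedding, ⟨fun A hA => ?_, fun A B hA hB => ?_⟩, card_map _⟩
  · obtain ⟨A, hA', rfl⟩ := mem_map.1 hA
    exact hsized A hA'
  · obtain ⟨A, hA', rfl⟩ := mem_map.1 hA
    refine mem_map.2 ⟨toColex B, hC A hA' _ ?_ hB.1.le, rfl⟩
    simpa using hB.2

lemma IsInitSeg.image_castLE {m n r : ℕ} {𝒞 : Finset (Finset (Fin m))} (h𝒞 : IsInitSeg 𝒞 r)
    (hmn : m ≤ n) : IsInitSeg (𝒞.image (image (Fin.castLE hmn))) r := by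
  have hinj := Fin.castLE_injective hmn
  refine ⟨fun A hA => ?_, fun A B hA hB => ?_⟩
  · obtain ⟨A, hA', rfl⟩ := mem_image.1 (mem_coe.1 hA)
    rw [card_image_of_injective _ hinj]
    exact h𝒞.1 hA'
  obtain ⟨A, hA', rfl⟩ := mem_image.1 hA
  have hBm : ∀ b ∈ B.image Fin.val, b < m := by
    refine Colex.forall_lt_mono ((toColex_image_lt_toColex_image Fin.val_strictMono).2 hB.1).le ?_
    simp
  set B₀ := (B.image Fin.val).attachFin hBm
  have hB₀ : B₀.image (Fin.castLE hmn) = B := by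
    ext b
    simp only [B₀, mem_image, mem_attachFin]
    constructor
    · rintro ⟨a, ⟨c, hc, hca⟩, rfl⟩
      rwa [show Fin.castLE hmn a = c from Fin.ext (by simp [hca])]
    · intro hb
      exact ⟨⟨b, hBm b (mem_image_of_mem _ hb)⟩, ⟨b, hb, rfl⟩, rfl⟩
  refine mem_image.2 ⟨B₀, h𝒞.2 hA' ⟨?_, ?_⟩, hB₀⟩
  · rw [← toColex_image_lt_toColex_image (Fin.strictMono_castLE hmn), hB₀]
    exact hB.1
  · rw [← card_image_of_injective _ hinj, hB₀, hB.2]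

end Colex

theorem card_div_choose_le_card_shadow_iterate_div_choose_of_card_le {𝕜 : Type*} [Semifield 𝕜]
    [LinearOrder 𝕜] [IsStrictOrderedRing 𝕜] {n m r i : ℕ} {𝒜 : Finset (Finset (Fin n))}
    (h𝒜 : (𝒜 : Set (Finset (Fin n))).Sized r) (hmn : m ≤ n) (hcard : #𝒜 ≤ m.choose r)
    (hi : i ≤ r) : (#𝒜 : 𝕜) / m.choose r ≤ #(∂^[i] 𝒜) / m.choose (r - i) := by
  -- By Kruskal–Katona an initial colex segment of the same size has no larger shadows, and since
  -- `#𝒜 ≤ C(m, r)` that segment lives on the first `m` points, where the local LYM inequality holds.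
  obtain ⟨𝒞, h𝒞, h𝒞card⟩ :=
    Colex.exists_isInitSeg_card_eq (α := Fin m) (m := #𝒜) (by rwa [Fintype.card_fin])
  have hinj := Fin.castLE_injective hmn
  have hlym := card_div_choose_le_card_shadow_iterate_div_choose (𝕜 := 𝕜) h𝒞.1 hi
  rw [Fintype.card_fin, h𝒞card] at hlym
  refine hlym.trans (div_le_div_of_nonneg_right ?_ (Nat.cast_nonneg _))
  rw [← card_shadow_iterate_image_image hinj]
  exact_mod_cast iterated_kk h𝒜 (by rw [card_image_of_injective _ (image_injective hinj), h𝒞card])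
    (h𝒞.image_castLE hmn)

theorem min_card_le_card_shadow_iterate [DecidableEq α] [Fintype α] {s t : ℕ}
    {𝒜 : Finset (Finset α)} (h𝒜 : (𝒜 : Set (Finset α)).Sized s)
    (hα : s + t + 2 = Fintype.card α) (hts : t ≤ s) :
    min #𝒜 ((Fintype.card α - 2).choose t) ≤ #(∂^[s - t] 𝒜) := by
  set n := Fintype.card α
  have he := (Fintype.equivFin α).injective
  set ℬ := 𝒜.image (image (Fintype.equivFin α))
  have hℬ : (ℬ : Set (Finset (Fin n))).Sized s := by
    intro B hB
    obtain ⟨A, hA, rfl⟩ := mem_image.1 (mem_coe.1 hB)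
    rw [card_image_of_injective _ he]
    exact h𝒜 hA
  rw [← card_image_of_injective 𝒜 (image_injective he), ← card_shadow_iterate_image_image he]
  rcases le_or_gt ((n - 2).choose s) #ℬ with hbig | hsmall
  · have := kruskal_katona_lovasz_form (i := s - t) (by omega) (by omega) (by omega) hℬ hbig
    rw [Nat.sub_sub_self hts] at this
    exact min_le_of_right_le this
  · have hsymm : (n - 2).choose t = (n - 2).choose s := by
      rw [show t = n - 2 - s by omega]
      exact Nat.choose_symm (by omega)
    have hpos : (0 : ℚ) < (n - 2).choose s := by exact_mod_cast Nat.choose_pos (by omega)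
    have := card_div_choose_le_card_shadow_iterate_div_choose_of_card_le (𝕜 := ℚ)
      (i := s - t) hℬ (by omega) hsmall.le (by omega)
    rw [Nat.sub_sub_self hts, hsymm, div_le_div_iff_of_pos_right hpos] at this
    exact min_le_of_left_le (by exact_mod_cast this)

def disjointSets [DecidableEq α] (X : Finset α) (t : ℕ) (D : Finset (Finset α)) :
    Finset (Finset α) :=
  {S ∈ powersetCard t X | ∃ A ∈ D, Disjoint S A}

theorem min_card_le_card_disjointSets_univ [DecidableEq α] [Fintype α] {t : ℕ}
    {D : Finset (Finset α)} (hD : (D : Set (Finset α)).Sized (t + 2))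
    (hα : 2 * t + 2 ≤ Fintype.card α) :
    min #D ((Fintype.card α - 2).choose t) ≤ #(disjointSets univ t D) := by
  set s := Fintype.card α - (t + 2)
  have hC : ((D.image compl : Finset (Finset α)) : Set (Finset α)).Sized s := by
    intro B hB
    obtain ⟨A, hA, rfl⟩ := mem_image.1 (mem_coe.1 hB)
    rw [card_compl, hD hA]
  have hsub : ∂^[s - t] (D.image compl) ⊆ disjointSets univ t D := by
    intro S hS
    obtain ⟨_, hB, hSB, hcard⟩ := mem_shadow_iterate_iff_exists_sdiff.1 hS
    obtain ⟨A, hA, rfl⟩ := mem_image.1 hB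
    have := card_sdiff_add_card_eq_card hSB
    rw [card_compl, hD hA] at this
    refine mem_filter.2 ⟨mem_powersetCard.2 ⟨subset_univ _, by omega⟩, A, hA, ?_⟩
    exact subset_compl_iff_disjoint_right.1 hSB
  calc min #D ((Fintype.card α - 2).choose t)
      = min #(D.image compl) ((Fintype.card α - 2).choose t) := by
        rw [card_image_of_injective _ compl_injective]
    _ ≤ #(∂^[s - t] (D.image compl)) := min_card_le_card_shadow_iterate hC (by omega) (by omega)
    _ ≤ _ := card_le_card hsub

theorem min_card_le_card_disjointSets [DecidableEq α] {X : Finset α} {t : ℕ}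
    {D : Finset (Finset α)} (hD : D ⊆ powersetCard (t + 2) X) (hX : 2 * t + 2 ≤ #X) :
    min #D ((#X - 2).choose t) ≤ #(disjointSets X t D) := by
  set e := Function.Embedding.subtype (· ∈ X)
  have hmap : ∀ A ∈ D, (A.subtype (· ∈ X)).map e = A := fun A hA =>
    subtype_map_of_mem (mem_powersetCard.1 (hD hA)).1
  set D' := D.image (Finset.subtype (· ∈ X))
  have hD' : #D' = #D := card_image_of_injOn fun A hA B hB hAB => by
    rw [← hmap A hA, ← hmap B hB]
    exact congrArg _ hAB
  have hD'sized : (D' : Set (Finset X)).Sized (t + 2) := by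
    intro A' hA'
    obtain ⟨A, hA, rfl⟩ := mem_image.1 (mem_coe.1 hA')
    rw [← card_map e, hmap A hA, (mem_powersetCard.1 (hD hA)).2]
  have := min_card_le_card_disjointSets_univ hD'sized (by rwa [Fintype.card_coe])
  rw [hD', Fintype.card_coe] at this
  refine this.trans (card_le_card_of_injOn (map e) (fun S hS => ?_) (map_injective e).injOn)
  obtain ⟨hS, A', hA', hdisj⟩ := mem_filter.1 hS
  obtain ⟨A, hA, rfl⟩ := mem_image.1 hA'
  refine mem_filter.2 ⟨mem_powersetCard.2 ⟨?_, ?_⟩, A, hA, ?_⟩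
  · intro x hx
    obtain ⟨y, _, rfl⟩ := mem_map.1 hx
    exact y.2
  · rw [card_map, (mem_powersetCard.1 hS).2]
  · rw [← hmap A hA]
    exact (disjoint_map e).2 hdisj

theorem card_filter_mem_mem_add_card_disjointSets_le [DecidableEq α] {F : Finset (Finset α)}
    {Y : Finset α} {k : ℕ} {u v : α} (hF : F ⊆ powersetCard k Y)
    (hint : (F : Set (Finset α)).Intersecting) (huv : u ≠ v) :
    #{A ∈ F | u ∈ A ∧ v ∈ A} + #(disjointSets (Y \ {u, v}) (k - 2) {A ∈ F | u ∉ A ∧ v ∉ A})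
      ≤ (#(Y \ {u, v})).choose (k - 2) := by
  set Fuv := {A ∈ F | u ∈ A ∧ v ∈ A}
  have hpair : ∀ B ∈ Fuv, {u, v} ⊆ B := fun B hB =>
    insert_subset (mem_filter.1 hB).2.1 (singleton_subset_iff.2 (mem_filter.1 hB).2.2)
  have htrace : Fuv.image (· \ {u, v}) ⊆ powersetCard (k - 2) (Y \ {u, v}) := by
    intro S hS
    obtain ⟨B, hB, rfl⟩ := mem_image.1 hS
    obtain ⟨hBY, hBk⟩ := mem_powersetCard.1 (hF (mem_filter.1 hB).1)
    refine mem_powersetCard.2 ⟨sdiff_subset_sdiff hBY subset_rfl, ?_⟩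
    rw [card_sdiff_of_subset (hpair B hB), hBk, card_pair_eq_two_iff.2 huv]
  have hdisj : Disjoint (Fuv.image (· \ {u, v}))
      (disjointSets (Y \ {u, v}) (k - 2) {A ∈ F | u ∉ A ∧ v ∉ A}) := by
    refine disjoint_left.2 fun S hS hSW => ?_
    obtain ⟨B, hB, rfl⟩ := mem_image.1 hS
    obtain ⟨-, A, hA, hSA⟩ := mem_filter.1 hSW
    obtain ⟨hAF, huA, hvA⟩ := mem_filter.1 hA
    obtain ⟨x, hx⟩ := not_disjoint_iff.1 (hint (mem_filter.1 hB).1 hAF)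
    have hAuv : Disjoint A {u, v} := by simp [huA, hvA]
    exact disjoint_left.1 hSA (mem_sdiff.2 ⟨hx.1, disjoint_left.1 hAuv hx.2⟩) hx.2
  calc #Fuv + #(disjointSets (Y \ {u, v}) (k - 2) {A ∈ F | u ∉ A ∧ v ∉ A})
      = #(Fuv.image (· \ {u, v}) ∪ disjointSets (Y \ {u, v}) (k - 2) {A ∈ F | u ∉ A ∧ v ∉ A}) := by
        rw [card_union_of_disjoint hdisj, card_image_of_injOn fun B hB C hC hBC => ?_]
        rw [← sdiff_union_of_subset (hpair B hB), ← sdiff_union_of_subset (hpair C hC)]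
        exact congrArg (· ∪ {u, v}) hBC
    _ ≤ #(powersetCard (k - 2) (Y \ {u, v})) :=
        card_le_card (union_subset htrace (filter_subset _ _))
    _ = _ := card_powersetCard _ _

end Finset

theorem stmt_15_general (n k : ℕ) (hk : 3 ≤ k) (hn : 2 * k ≤ n)
    (F : Finset (Finset ℕ)) (hF : F ⊆ Finset.powersetCard k (Finset.Icc 1 n))
    (hint : ∀ A ∈ F, ∀ B ∈ F, (A ∩ B).Nonempty)
    (u : ℕ) (hu : u ∈ Finset.Icc 1 n)
    (v : ℕ) (hv : v ∈ Finset.Icc 1 n) (hvu : v ≠ u)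
    (hdv : (n - 2).choose (k - 2) < degree F v)
    (hbar : (F.filter fun A => v ∈ A ∧ u ∉ A).card ≤ (n - 4).choose (k - 2)) :
    (F.filter fun A => u ∉ A).card < 2 * (F.filter fun A => v ∈ A ∧ u ∉ A).card := by
  have htrace := card_filter_mem_mem_add_card_disjointSets_le hF
    (fun A hA B hB => not_disjoint_iff_nonempty_inter.2 (hint A hA B hB)) hvu.symm
  set X := Icc 1 n \ {u, v}
  have hX : #X = n - 2 := by
    rw [card_sdiff_of_subset (insert_subset hu (singleton_subset_iff.2 hv)),
      card_pair_eq_two_iff.2 hvu.symm, Nat.card_Icc]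
    omega
  set D := {A ∈ F | u ∉ A ∧ v ∉ A}
  have hsplit_u : #{A ∈ F | u ∉ A} = #{A ∈ F | v ∈ A ∧ u ∉ A} + #D := by
    rw [← card_filter_add_card_filter_not (s := {A ∈ F | u ∉ A}) (v ∈ ·), filter_filter,
      filter_filter]
    simp only [and_comm, D]
  have hsplit_v : degree F v = #{A ∈ F | u ∈ A ∧ v ∈ A} + #{A ∈ F | v ∈ A ∧ u ∉ A} := by
    rw [degree, ← card_filter_add_card_filter_not (s := {A ∈ F | v ∈ A}) (u ∈ ·), filter_filter,
      filter_filter]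
    simp only [and_comm]
  have hD : D ⊆ powersetCard (k - 2 + 2) X := by
    intro A hA
    obtain ⟨hAF, huA, hvA⟩ := mem_filter.1 hA
    obtain ⟨hAY, hAk⟩ := mem_powersetCard.1 (hF hAF)
    exact mem_powersetCard.2 ⟨subset_sdiff.2 ⟨hAY, by simp [huA, hvA]⟩, by omega⟩
  have hKK := min_card_le_card_disjointSets hD (by omega)
  rw [hX] at htrace hKK
  rw [show n - 2 - 2 = n - 4 by omega] at hKK
  omega

theorem stmt_15 (n k : ℕ) (hk : 3 ≤ k) (hn : 2 * k ≤ n)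
    (F : Finset (Finset ℕ)) (hF : F ⊆ Finset.powersetCard k (Finset.Icc 1 n))
    (hint : ∀ A ∈ F, ∀ B ∈ F, (A ∩ B).Nonempty)
    (u : ℕ) (hu : u ∈ Finset.Icc 1 n) (hdu : degree F u = nthDegree n F 1)
    (v : ℕ) (hv : v ∈ Finset.Icc 1 n) (hvu : v ≠ u)
    (hdv : (n - 2).choose (k - 2) < degree F v)
    (hbar : (F.filter fun A => v ∈ A ∧ u ∉ A).card ≤ (n - 4).choose (k - 2)) :
    (F.filter fun A => u ∉ A).card < 2 * (F.filter fun A => v ∈ A ∧ u ∉ A).card :=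
  stmt_15_general n k hk hn F hF hint u hu v hv hvu hdv hbar
end

section
/- Let 1 ≤ t < k and n ≥ \binom{t+2}{2}·k² (where \binom{t+2}{2} = (t+2)(t+1)/2), and let F ⊆ \binom{[n]}{k} be a nonempty saturated t-intersecting family with τ_t(F) ≥ t + 2. Then d_{1+τ_t(F)}(F) < \binom{n−t−1}{k−t−1}. -/
open Finset

/-- The `t`-covering number of `F` on the ground set `[n]`: the minimum size of a
`t`-transversal, i.e. of a set `T ⊆ [n]` with `|T ∩ A| ≥ t` for all `A ∈ F`. -/
noncomputable def tauT (n t : ℕ) (F : Finset (Finset ℕ)) : ℕ :=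
  sInf {m : ℕ | ∃ T ⊆ Finset.Icc 1 n, T.card = m ∧ ∀ A ∈ F, t ≤ (T ∩ A).card}

/-!
Let `T` be a minimum `t`-transversal, `τ = |T|`. A member of `F` through a point `x ∉ T` contains
`x` and a `t`-subset of `T`. Sets of size `< τ` are not `t`-transversals, so some `W ∈ F` meets
such a set `A` in fewer than `t` points, and every member of `F` containing `A` contains one of
the at most `k` points of `W \ A` as well: branching `τ - t - 1` times from `{x} ∪ S` bounds the
degree of `x` by `C(τ, t) k^(τ-t-1) C(n-τ, k-τ)`. For `n ≥ C(t+2, 2) k²` this is less than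
`C(n-t-1, k-t-1)`, so only the `τ` points of `T` can reach that degree.
-/

section Counting

variable {α : Type*} [DecidableEq α] {X : Finset α} {F : Finset (Finset α)} {k t τ : ℕ}

def IsTransversal (t : ℕ) (F : Finset (Finset α)) (T : Finset α) : Prop :=
  ∀ A ∈ F, t ≤ #(T ∩ A)

lemma card_filter_superset_le (hF : F ⊆ powersetCard k X) {A : Finset α} (hA : A ⊆ X)
    (hAk : #A ≤ k) : #{G ∈ F | A ⊆ G} ≤ (#X - #A).choose (k - #A) := by
  rw [← card_filter_powersetCard_subset A X k hA hAk]
  exact card_le_card (filter_subset_filter _ hF)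

lemma card_filter_superset_le_pow_mul_choose (hF : F ⊆ powersetCard k X)
    (hint : ∀ A ∈ F, ∀ B ∈ F, t ≤ #(A ∩ B))
    (hmin : ∀ A ⊆ X, #A < τ → ¬ IsTransversal t F A) (hτk : τ ≤ k)
    {A : Finset α} (hA : A ⊆ X) (hAτ : #A ≤ τ) :
    #{G ∈ F | A ⊆ G} ≤ k ^ (τ - #A) * (#X - τ).choose (k - τ) := by
  induction h : τ - #A generalizing A with
  | zero =>
    obtain rfl : #A = τ := by omega
    simpa using card_filter_superset_le hF hA hτk
  | succ d ih =>
    obtain ⟨W, hW, hAW⟩ : ∃ W ∈ F, #(A ∩ W) < t := by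
      simpa [IsTransversal] using hmin A hA (by omega)
    obtain ⟨hWX, hWk⟩ := mem_powersetCard.1 (hF hW)
    have hcover :
        {G ∈ F | A ⊆ G} ⊆ (W \ A).biUnion fun w => {G ∈ F | insert w A ⊆ G} := by
      intro G hG
      obtain ⟨hGF, hAG⟩ := mem_filter.1 hG
      -- `A ∩ W ⊆ G ∩ W` is strict, since `#(A ∩ W) < t ≤ #(G ∩ W)`
      obtain ⟨w, hwGW, hwAW⟩ : ∃ w ∈ G ∩ W, w ∉ A ∩ W := by
        refine not_subset.1 fun hsub => ?_
        have := card_le_card hsub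
        have := hint G hGF W hW
        omega
      obtain ⟨hwG, hwW⟩ := mem_inter.1 hwGW
      have hwA : w ∉ A := fun hwA => hwAW (mem_inter.2 ⟨hwA, hwW⟩)
      exact mem_biUnion.2 ⟨w, mem_sdiff.2 ⟨hwW, hwA⟩,
        mem_filter.2 ⟨hGF, insert_subset hwG hAG⟩⟩
    calc #{G ∈ F | A ⊆ G}
        ≤ #(W \ A) * (k ^ d * (#X - τ).choose (k - τ)) := by
          refine (card_le_card hcover).trans (card_biUnion_le_card_mul _ _ _ fun w hw => ?_)
          obtain ⟨hwW, hwA⟩ := mem_sdiff.1 hw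
          have hcard : #(insert w A) = #A + 1 := card_insert_of_notMem hwA
          simpa [hcard, show τ - (#A + 1) = d by omega] using
            ih (insert_subset (hWX hwW) hA) (by omega) (by omega)
      _ ≤ k * (k ^ d * (#X - τ).choose (k - τ)) := by
          gcongr
          exact (card_le_card sdiff_subset).trans hWk.le
      _ = k ^ (d + 1) * (#X - τ).choose (k - τ) := by ring

lemma card_filter_mem_le (hF : F ⊆ powersetCard k X)
    (hint : ∀ A ∈ F, ∀ B ∈ F, t ≤ #(A ∩ B)) {T : Finset α} (hTX : T ⊆ X)
    (hT : IsTransversal t F T) (hmin : ∀ A ⊆ X, #A < #T → ¬ IsTransversal t F A)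
    (htT : t < #T) (hTk : #T ≤ k) {x : α} (hxX : x ∈ X) (hxT : x ∉ T) :
    #{G ∈ F | x ∈ G} ≤
      (#T).choose t * (k ^ (#T - t - 1) * (#X - #T).choose (k - #T)) := by
  have hcover : {G ∈ F | x ∈ G} ⊆
      (powersetCard t T).biUnion fun S => {G ∈ F | insert x S ⊆ G} := by
    intro G hG
    obtain ⟨hGF, hxG⟩ := mem_filter.1 hG
    obtain ⟨S, hS, hSt⟩ := exists_subset_card_eq (hT G hGF)
    exact mem_biUnion.2 ⟨S, mem_powersetCard.2 ⟨hS.trans inter_subset_left, hSt⟩,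
      mem_filter.2 ⟨hGF, insert_subset hxG (hS.trans inter_subset_right)⟩⟩
  refine (card_le_card hcover).trans ?_
  rw [← card_powersetCard t T]
  refine card_biUnion_le_card_mul _ _ _ fun S hS => ?_
  obtain ⟨hST, hSt⟩ := mem_powersetCard.1 hS
  have hcard : #(insert x S) = t + 1 := by
    rw [card_insert_of_notMem fun hxS => hxT (hST hxS), hSt]
  simpa [hcard, Nat.sub_sub] using card_filter_superset_le_pow_mul_choose hF hint hmin hTk
    (insert_subset hxX (hST.trans hTX)) (by omega)

end Counting

lemma choose_le_choose_two_pow (t m : ℕ) :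
    (t + 2 + m).choose t ≤ (t + 2).choose 2 ^ (m + 1) := by
  induction m with
  | zero => simpa using Nat.choose_symm_add.le
  | succ m ih =>
    have hQ : t + 1 ≤ (t + 2).choose 2 := by
      rw [Nat.choose_succ_succ', Nat.choose_one_right]; omega
    have hstep := Nat.choose_mul_succ_eq (t + 2 + m) t
    rw [show t + 2 + m + 1 - t = m + 3 by omega] at hstep
    refine Nat.le_of_mul_le_mul_right (c := m + 3) ?_ (by omega)
    calc (t + 2 + (m + 1)).choose t * (m + 3)
        = (t + 2 + m).choose t * (t + 2 + m + 1) := hstep.symm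
      _ ≤ (t + 2).choose 2 ^ (m + 1) * ((m + 3) * (t + 1)) := by gcongr; nlinarith
      _ ≤ (t + 2).choose 2 ^ (m + 1) * ((m + 3) * (t + 2).choose 2) := by gcongr
      _ = (t + 2).choose 2 ^ (m + 1 + 1) * (m + 3) := by ring

lemma mul_choose_lt_choose_succ_succ {a b c : ℕ} (h : c * (b + 1) < a + 1) (hba : b ≤ a) :
    c * a.choose b < (a + 1).choose (b + 1) := by
  refine Nat.lt_of_mul_lt_mul_right (a := b + 1) ?_
  calc c * a.choose b * (b + 1) = c * (b + 1) * a.choose b := by ring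
    _ < (a + 1) * a.choose b := Nat.mul_lt_mul_of_pos_right h (Nat.choose_pos hba)
    _ = (a + 1).choose (b + 1) * (b + 1) := Nat.add_one_mul_choose_eq a b

lemma pow_mul_choose_lt_choose_add {a b c : ℕ} (m : ℕ) (h : c * (b + m + 1) < a + m + 1)
    (hba : b ≤ a) : c ^ (m + 1) * a.choose b < (a + m + 1).choose (b + m + 1) := by
  induction m with
  | zero => simpa using mul_choose_lt_choose_succ_succ h hba
  | succ m ih =>
    have h' : c * (b + m + 1) < a + m + 1 := by
      rcases Nat.eq_zero_or_pos c with rfl | hc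
      · omega
      · nlinarith
    calc c ^ (m + 1 + 1) * a.choose b = c * (c ^ (m + 1) * a.choose b) := by ring
      _ ≤ c * (a + m + 1).choose (b + m + 1) := Nat.mul_le_mul_left c (ih h').le
      _ < (a + m + 1 + 1).choose (b + m + 1 + 1) :=
          mul_choose_lt_choose_succ_succ (by omega) (by omega)

lemma choose_mul_pow_mul_choose_lt {n k t τ : ℕ} (htτ : t + 2 ≤ τ) (hτk : τ ≤ k)
    (hn : (t + 2).choose 2 * k ^ 2 ≤ n) :
    τ.choose t * (k ^ (τ - t - 1) * (n - τ).choose (k - τ)) <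
      (n - t - 1).choose (k - t - 1) := by
  obtain ⟨m, rfl⟩ : ∃ m, τ = t + 2 + m := ⟨τ - (t + 2), by omega⟩
  set Q := (t + 2).choose 2
  have hQ : 1 ≤ Q := Nat.choose_pos (by omega)
  have hkn : k ≤ n := by nlinarith
  -- each branching step costs `Q k`, while `C(a + 1, b + 1) / C(a, b) = (a + 1) / (b + 1) > Q k`
  have hsmall : Q * k * (k - (t + 2 + m) + m + 1) < n - (t + 2 + m) + m + 1 := by
    have e1 : k - (t + 2 + m) + m + 1 = k - (t + 1) := by omega
    have e2 : n - (t + 2 + m) + m + 1 = n - (t + 1) := by omega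
    rw [e1, e2]
    obtain ⟨r, rfl⟩ : ∃ r, k = t + 2 + r := ⟨k - (t + 2), by omega⟩
    rw [show t + 2 + r - (t + 1) = r + 1 by omega, Nat.lt_sub_iff_add_lt]
    nlinarith
  have hlt := pow_mul_choose_lt_choose_add m hsmall (by omega)
  rw [show n - (t + 2 + m) + m + 1 = n - t - 1 by omega,
    show k - (t + 2 + m) + m + 1 = k - t - 1 by omega] at hlt
  rw [show t + 2 + m - t - 1 = m + 1 by omega]
  calc _ ≤ Q ^ (m + 1) * (k ^ (m + 1) * (n - (t + 2 + m)).choose (k - (t + 2 + m))) :=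
        Nat.mul_le_mul_right _ (choose_le_choose_two_pow t m)
    _ = (Q * k) ^ (m + 1) * (n - (t + 2 + m)).choose (k - (t + 2 + m)) := by ring
    _ < (n - t - 1).choose (k - t - 1) := hlt

lemma getD_sort_ge_lt {M : Multiset ℕ} {B i : ℕ} (hB : 0 < B)
    (hM : Multiset.card (M.filter (B ≤ ·)) ≤ i) : (M.sort (· ≥ ·)).getD i 0 < B := by
  set l := M.sort (· ≥ ·)
  have hsorted : l.Pairwise (· ≥ ·) := Multiset.pairwise_sort M (· ≥ ·)
  by_contra! hle
  have hi : i < l.length := by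
    by_contra! hi
    rw [List.getD_eq_default _ _ hi] at hle
    omega
  rw [List.getD_eq_getElem _ _ hi] at hle
  have htake : (l.take (i + 1)).filter (B ≤ ·) = l.take (i + 1) := by
    refine List.filter_eq_self.2 fun a ha => ?_
    obtain ⟨j, hj, rfl⟩ := List.mem_iff_getElem.1 ha
    rw [List.length_take] at hj
    rw [List.getElem_take]
    rcases Nat.lt_or_ge j i with hji | hji
    · exact decide_eq_true (hle.trans (List.pairwise_iff_getElem.1 hsorted j i (by omega) hi hji))
    · obtain rfl : j = i := by omega
      exact decide_eq_true hle
  have hcount := ((List.take_sublist (i + 1) l).filter (B ≤ ·)).length_le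
  have hfilter : (l.filter (B ≤ ·)).length = Multiset.card (M.filter (B ≤ ·)) := by
    conv_rhs => rw [← Multiset.sort_eq M (· ≥ ·)]
    rw [Multiset.filter_coe, Multiset.coe_card]
  rw [htake, List.length_take, hfilter] at hcount
  omega

lemma nthDegree_lt {n B i : ℕ} {F : Finset (Finset ℕ)} (hB : 0 < B)
    (h : #{x ∈ Icc 1 n | B ≤ degree F x} ≤ i) : nthDegree n F (1 + i) < B := by
  rw [nthDegree, show 1 + i - 1 = i by omega]
  refine getD_sort_ge_lt hB ?_
  rwa [Multiset.filter_map, Multiset.card_map]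

lemma tauT_le_card {n t : ℕ} {F : Finset (Finset ℕ)} {T : Finset ℕ} (hT : T ⊆ Icc 1 n)
    (hTF : IsTransversal t F T) : tauT n t F ≤ #T :=
  Nat.sInf_le ⟨T, hT, rfl, hTF⟩

lemma exists_isTransversal_card_eq_tauT {n t : ℕ} {F : Finset (Finset ℕ)}
    (h : ∃ T ⊆ Icc 1 n, IsTransversal t F T) :
    ∃ T ⊆ Icc 1 n, #T = tauT n t F ∧ IsTransversal t F T := by
  obtain ⟨T, hT, hTF⟩ := h
  exact Nat.sInf_mem (s := {m | ∃ T ⊆ Icc 1 n, #T = m ∧ IsTransversal t F T})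
    ⟨_, T, hT, rfl, hTF⟩

theorem stmt_19_general (n k t : ℕ)
    (hn : (t + 2) * (t + 1) / 2 * k ^ 2 ≤ n)
    (F : Finset (Finset ℕ)) (hF : F ⊆ Finset.powersetCard k (Finset.Icc 1 n))
    (hne : F.Nonempty)
    (hint : ∀ A ∈ F, ∀ B ∈ F, t ≤ (A ∩ B).card)
    (hτ : t + 2 ≤ tauT n t F) :
    nthDegree n F (1 + tauT n t F) < (n - t - 1).choose (k - t - 1) := by
  obtain ⟨A₀, hA₀⟩ := hne
  obtain ⟨hA₀X, hA₀k⟩ := mem_powersetCard.1 (hF hA₀)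
  have hA₀T : IsTransversal t F A₀ := fun A hA => hint A₀ hA₀ A hA
  obtain ⟨T, hTX, hTτ, hT⟩ := exists_isTransversal_card_eq_tauT ⟨A₀, hA₀X, hA₀T⟩
  have hτk : tauT n t F ≤ k := hA₀k ▸ tauT_le_card hA₀X hA₀T
  have hkn : k ≤ n := by simpa [hA₀k] using card_le_card hA₀X
  have hQ : (t + 2) * (t + 1) / 2 = (t + 2).choose 2 := by simp [Nat.choose_two_right]
  have hdeg : ∀ x ∈ Icc 1 n, x ∉ T → degree F x < (n - t - 1).choose (k - t - 1) := by
    intro x hx hxT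
    have hbound := card_filter_mem_le hF hint hTX hT
      (fun A hA hAT hAF => by have := tauT_le_card hA hAF; omega) (by omega) (by omega) hx hxT
    rw [Nat.card_Icc, Nat.add_sub_cancel, hTτ] at hbound
    exact hbound.trans_lt (choose_mul_pow_mul_choose_lt hτ hτk (hQ ▸ hn))
  refine nthDegree_lt (Nat.choose_pos (by omega)) (hTτ ▸ card_le_card fun x hx => ?_)
  rw [mem_filter] at hx
  by_contra hxT
  exact (hdeg x hx.1 hxT).not_ge hx.2

theorem stmt_19 (n k t : ℕ) (ht : 1 ≤ t) (htk : t < k)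
    (hn : (t + 2) * (t + 1) / 2 * k ^ 2 ≤ n)
    (F : Finset (Finset ℕ)) (hF : F ⊆ Finset.powersetCard k (Finset.Icc 1 n))
    (hne : F.Nonempty)
    (hint : ∀ A ∈ F, ∀ B ∈ F, t ≤ (A ∩ B).card)
    (hsat : ∀ G ∈ Finset.powersetCard k (Finset.Icc 1 n), G ∉ F →
      ¬ (∀ A ∈ insert G F, ∀ B ∈ insert G F, t ≤ (A ∩ B).card))
    (hτ : t + 2 ≤ tauT n t F) :
    nthDegree n F (1 + tauT n t F) < (n - t - 1).choose (k - t - 1) :=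
  stmt_19_general n k t hn F hF hne hint hτ
end
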